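/- arXiv:1801.06804 — 9 statements merged into one kernel-verified Lean document; each statement's English description precedes it below -/
import Mathlib

section
/- If L : [1,∞) → [1,∞) is non-decreasing with L(ρ) → ∞ and the integral ∫₁^∞ du/(u L(u)) converges, then defining L̃(ρ) = L(ρ) · ∫_ρ^∞ du/(u L(u)), the integral ∫_{ρ₀}^∞ du/(u L̃(u)) diverges for any ρ₀ ≥ 1. -/
open MeasureTheory Set Filter

theorem stmt0 (L Lt : ℝ → ℝ)
    (hL1 : ∀ ρ ≥ (1:ℝ), 1 ≤ L ρ)
    (hmono : MonotoneOn L (Ici 1))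
    (htend : Tendsto L atTop atTop)
    (hint : IntegrableOn (fun u => 1 / (u * L u)) (Ioi 1))
    (hLt : ∀ ρ, Lt ρ = L ρ * ∫ u in Ioi ρ, 1 / (u * L u)) :
    ∀ ρ₀ ≥ (1:ℝ), ¬ IntegrableOn (fun u => 1 / (u * Lt u)) (Ioi ρ₀) := by
  intro ρ₀ hρ₀ h
  set f : ℝ → ℝ := fun u => 1 / (u * L u) with hf
  set G : ℝ → ℝ := fun a => ∫ u in Ioi a, f u with hG
  set F : ℝ → ℝ := fun u => 1 / (u * Lt u) with hF
  have hfint : ∀ a ≥ (1:ℝ), IntegrableOn f (Ioi a) := fun a ha =>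
    hint.mono_set (Ioi_subset_Ioi ha)
  have hfnonneg : ∀ u ≥ (1:ℝ), 0 ≤ f u := by
    intro u hu
    have := hL1 u hu
    exact div_nonneg zero_le_one (by nlinarith)
  have hGpos : ∀ a ≥ (1:ℝ), 0 < G a := by
    intro a ha
    have hsub : Ioc a (a + 1) ⊆ Ioi a := Ioc_subset_Ioi_self
    have hci : IntegrableOn f (Ioc a (a + 1)) := (hfint a ha).mono_set hsub
    have hLpos : (1:ℝ) ≤ L (a + 1) := hL1 _ (by linarith)
    have hcpos : 0 < 1 / ((a + 1) * L (a + 1)) := by positivity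
    have h1 : 1 / ((a + 1) * L (a + 1)) ≤ ∫ u in Ioc a (a + 1), f u := by
      have hmon : ∫ u in Ioc a (a + 1), (1 / ((a + 1) * L (a + 1))) ≤
          ∫ u in Ioc a (a + 1), f u := by
        apply setIntegral_mono_on (integrableOn_const measure_Ioc_lt_top.ne) hci
          measurableSet_Ioc
        intro u hu
        have hu1 : (1:ℝ) ≤ u := le_trans ha hu.1.le
        have hLu : 1 ≤ L u := hL1 u hu1
        have hle : u * L u ≤ (a + 1) * L (a + 1) := by
          have h3 := hmono (mem_Ici.2 hu1) (mem_Ici.2 (by linarith : (1:ℝ) ≤ a + 1)) hu.2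
          have h4 : u ≤ a + 1 := hu.2
          nlinarith
        exact one_div_le_one_div_of_le (by positivity) hle
      rwa [setIntegral_const, Real.volume_real_Ioc, show a + 1 - a = 1 by ring,
        max_eq_left zero_le_one, one_smul] at hmon
    have h2 : ∫ u in Ioc a (a + 1), f u ≤ G a := by
      apply setIntegral_mono_set (hfint a ha) ?_ hsub.eventuallyLE
      filter_upwards [ae_restrict_mem measurableSet_Ioi] with u hu
      exact hfnonneg u (le_trans ha hu.le)
    linarith
  have hGsplit : ∀ a b, 1 ≤ a → a ≤ b → G a = (∫ u in Ioc a b, f u) + G b := by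
    intro a b ha hab
    have hu : Ioc a b ∪ Ioi b = Ioi a := Ioc_union_Ioi_eq_Ioi hab
    rw [hG]
    calc (∫ u in Ioi a, f u) = ∫ u in Ioc a b ∪ Ioi b, f u := by rw [hu]
      _ = (∫ u in Ioc a b, f u) + ∫ u in Ioi b, f u :=
        setIntegral_union (Ioc_disjoint_Ioi le_rfl) measurableSet_Ioi
          ((hfint a ha).mono_set (fun u hu => hu.1))
          (hfint b (le_trans ha hab))
  have hGanti : ∀ a b, 1 ≤ a → a ≤ b → G b ≤ G a := by
    intro a b ha hab
    have := hGsplit a b ha hab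
    have hnn : 0 ≤ ∫ u in Ioc a b, f u :=
      setIntegral_nonneg measurableSet_Ioc fun u hu => hfnonneg u (le_trans ha hu.1.le)
    linarith
  have hGtend : Tendsto G atTop (nhds 0) := by
    have h1 : Tendsto (fun b => ∫ u in (1:ℝ)..b, f u) atTop
        (nhds (∫ u in Ioi 1, f u)) :=
      intervalIntegral_tendsto_integral_Ioi 1 hint tendsto_id
    have h3 : Tendsto (fun b => (∫ u in Ioi 1, f u) - ∫ u in (1:ℝ)..b, f u) atTop
        (nhds 0) := by
      have h2 := (tendsto_const_nhds (x := ∫ u in Ioi 1, f u) (f := atTop)).sub h1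
      simpa using h2
    apply h3.congr'
    filter_upwards [eventually_ge_atTop (1:ℝ)] with b hb
    rw [intervalIntegral.integral_of_le hb]
    have := hGsplit 1 b le_rfl hb
    have hG1 : G 1 = ∫ u in Ioi 1, f u := rfl
    linarith
  -- positivity of Lt and F
  have hLtpos : ∀ u ≥ (1:ℝ), 0 < Lt u := by
    intro u hu
    rw [hLt u]
    have := hGpos u hu
    have := hL1 u hu
    rw [hG] at *
    nlinarith
  have hFnonneg : ∀ u ≥ (1:ℝ), 0 ≤ F u := by
    intro u hu
    have := hLtpos u hu
    have : 0 < u * Lt u := by nlinarith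
    positivity
  set C : ℝ := ∫ u in Ioi ρ₀, F u with hC
  have key : ∀ n : ℕ, ∃ a, ρ₀ ≤ a ∧ (n : ℝ) / 2 ≤ ∫ u in Ioc ρ₀ a, F u := by
    intro n
    induction n with
    | zero => exact ⟨ρ₀, le_rfl, by simp⟩
    | succ n ih =>
      obtain ⟨a, ha, hIa⟩ := ih
      have ha1 : (1:ℝ) ≤ a := le_trans hρ₀ ha
      have hGa : 0 < G a := hGpos a ha1
      -- choose b > a with G b ≤ G a / 2
      have hev : ∀ᶠ b in atTop, G b < G a / 2 :=
        hGtend.eventually (gt_mem_nhds (by linarith))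
      obtain ⟨b, hb1, hb2⟩ := (hev.and (eventually_gt_atTop a)).exists
      have hab : a ≤ b := hb2.le
      have hb1' : (1:ℝ) ≤ b := le_trans ha1 hab
      -- integrability on pieces
      have hsub1 : Ioc ρ₀ a ⊆ Ioi ρ₀ := Ioc_subset_Ioi_self
      have hsub2 : Ioc a b ⊆ Ioi ρ₀ := fun u hu => lt_of_le_of_lt ha hu.1
      have hFi1 : IntegrableOn F (Ioc ρ₀ a) := h.mono_set hsub1
      have hFi2 : IntegrableOn F (Ioc a b) := h.mono_set hsub2
      -- split integral
      have hsum : ∫ u in Ioc ρ₀ b, F u =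
          (∫ u in Ioc ρ₀ a, F u) + ∫ u in Ioc a b, F u := by
        rw [← Ioc_union_Ioc_eq_Ioc ha hab]
        exact setIntegral_union (Ioc_disjoint_Ioc_of_le le_rfl) measurableSet_Ioc hFi1 hFi2
      -- lower bound on the new piece
      have hlow : (1:ℝ) / 2 ≤ ∫ u in Ioc a b, F u := by
        have hfi : IntegrableOn (fun u => f u / G a) (Ioc a b) :=
          (((hfint a ha1).mono_set Ioc_subset_Ioi_self)).div_const _
        have e1 : ∫ u in Ioc a b, f u / G a ≤ ∫ u in Ioc a b, F u := by
          apply setIntegral_mono_on hfi hFi2 measurableSet_Ioc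
          intro u hu
          have hu1 : (1:ℝ) ≤ u := le_trans ha1 hu.1.le
          have hupos : 0 < u := by linarith
          have hLu : 1 ≤ L u := hL1 u hu1
          have hGu : 0 < G u := hGpos u hu1
          have hGua : G u ≤ G a := hGanti a u ha1 hu.1.le
          have hFu : F u = 1 / (u * L u * G u) := by
            show 1 / (u * Lt u) = _
            rw [hLt u]
            show 1 / (u * (L u * G u)) = _
            ring_nf
          rw [hFu, hf]
          rw [div_div, mul_comm (u * L u) (G a)]
          rw [show u * L u * G u = G u * (u * L u) by ring]
          apply one_div_le_one_div_of_le (by positivity)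
          exact mul_le_mul_of_nonneg_right hGua (by positivity)
        have e2 : ∫ u in Ioc a b, f u / G a = (G a - G b) / G a := by
          rw [integral_div]
          congr 1
          have := hGsplit a b ha1 hab
          linarith
        have e3 : (1:ℝ) / 2 ≤ (G a - G b) / G a := by
          rw [le_div_iff₀ hGa]
          linarith
        linarith
      refine ⟨b, le_trans ha hab, ?_⟩
      push_cast
      rw [hsum]
      linarith
  -- contradiction
  obtain ⟨n, hn⟩ := exists_nat_gt (2 * C)
  obtain ⟨a, ha, hIa⟩ := key n
  have hle : ∫ u in Ioc ρ₀ a, F u ≤ C := by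
    apply setIntegral_mono_set h
    · filter_upwards [ae_restrict_mem measurableSet_Ioi] with u hu
      exact hFnonneg u (le_trans hρ₀ (le_of_lt hu))
    · exact (Ioc_subset_Ioi_self : Ioc ρ₀ a ⊆ Ioi ρ₀).eventuallyLE
  linarith
end

section
/- Suppose L : [0,∞) → [1,∞) is C¹, eventually increasing and unbounded, and the function ε(x) = x L'(x)/L(x) satisfies: ε(x) + x ε'(x) > 0 for x ≥ r₀ (equivalently the map x ↦ x L(x) e^{1+ε(x)} is increasing there). Define Λ_L(r) = sup_{x>0} [x log r − x log(x L(x))]. Then there exists r₀ > 0 such that for all r > r₀ and all t > 1, Λ_L(r t) ≤ t · Λ_L(r). -/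
open Filter

set_option maxHeartbeats 1000000

theorem stmt3 (L Λ ε : ℝ → ℝ)
    (hL1 : ∀ x ≥ (0:ℝ), 1 ≤ L x)
    (hdiff : Differentiable ℝ L)
    (hmono : ∃ x₀, MonotoneOn L (Set.Ici x₀))
    (htend : Tendsto L atTop atTop)
    (hε : ∀ x, ε x = x * deriv L x / L x)
    (hpos : ∃ r₁ : ℝ, ∀ x ≥ r₁, 0 < ε x + x * deriv ε x)
    (hΛ : ∀ r, Λ r = sSup {y | ∃ x > (0:ℝ), y = x * Real.log r - x * Real.log (x * L x)}) :
    ∃ r₀ > (0:ℝ), ∀ r > r₀, ∀ t > (1:ℝ), Λ (r * t) ≤ t * Λ r := by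
  obtain ⟨x₀, hx₀⟩ := hmono
  set a : ℝ := max x₀ 1 + 1 with ha_def
  have hax₀ : x₀ < a := lt_of_le_of_lt (le_max_left x₀ 1) (lt_add_one _)
  have ha1 : (1:ℝ) ≤ a := by
    have := le_max_right x₀ (1:ℝ); linarith
  have ha0 : (0:ℝ) < a := by linarith
  set K : ℝ := (a+1) * Real.log ((a+1) * L (a+1)) - a * Real.log a + a with hK_def
  refine ⟨max (Real.exp 1 * a) (Real.exp K), lt_max_of_lt_left (mul_pos (Real.exp_pos 1) ha0), ?_⟩
  intro r hr t ht
  have ht0 : (0:ℝ) < t := by linarith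
  have hrea : Real.exp 1 * a < r := lt_of_le_of_lt (le_max_left _ _) hr
  have hrK : Real.exp K < r := lt_of_le_of_lt (le_max_right _ _) hr
  have hr0 : (0:ℝ) < r := lt_trans (mul_pos (Real.exp_pos 1) ha0) hrea
  have har : a ≤ r := by nlinarith [Real.add_one_le_exp (1:ℝ)]
  have hlogr : K ≤ Real.log r := (Real.le_log_iff_exp_le hr0).mpr hrK.le
  -- boundedness of the defining set
  have hbdd : ∀ s : ℝ, 0 < s →
      BddAbove {y | ∃ x > (0:ℝ), y = x * Real.log s - x * Real.log (x * L x)} := by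
    intro s hs
    refine ⟨s, ?_⟩
    rintro y ⟨x, hx, rfl⟩
    have hLx : 1 ≤ L x := hL1 x hx.le
    have h1 : Real.log x ≤ Real.log (x * L x) := Real.log_le_log hx (by nlinarith)
    have h2 : Real.log (s / x) ≤ s / x - 1 := Real.log_le_sub_one_of_pos (by positivity)
    have h3 : Real.log (s / x) = Real.log s - Real.log x := Real.log_div hs.ne' hx.ne'
    have hxx : x * (s / x) = s := by field_simp
    have e1 : x * Real.log x ≤ x * Real.log (x * L x) := mul_le_mul_of_nonneg_left h1 hx.le
    have e2 : x * Real.log (s / x) ≤ x * (s / x - 1) := mul_le_mul_of_nonneg_left h2 hx.le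
    rw [h3] at e2
    nlinarith [e1, e2, hxx]
  have hΛ_ge : ∀ x : ℝ, 0 < x → x * Real.log r - x * Real.log (x * L x) ≤ Λ r := by
    intro x hx
    rw [hΛ]
    exact le_csSup (hbdd r hr0) ⟨x, hx, rfl⟩
  rw [hΛ (r * t)]
  have hne : {y | ∃ x > (0:ℝ), y = x * Real.log (r * t) - x * Real.log (x * L x)}.Nonempty :=
    ⟨1 * Real.log (r * t) - 1 * Real.log (1 * L 1), ⟨1, one_pos, rfl⟩⟩
  apply csSup_le hne
  rintro y ⟨x, hx, rfl⟩
  have hLx1 : 1 ≤ L x := hL1 x hx.le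
  have hLx0 : 0 < L x := by linarith
  have e1 : Real.log (r * t) = Real.log r + Real.log t := Real.log_mul hr0.ne' ht0.ne'
  have e2 : Real.log (x * L x) = Real.log x + Real.log (L x) := Real.log_mul hx.ne' hLx0.ne'
  by_cases hc : t * a ≤ x
  · -- large x : compare with witness x / t for Λ r
    set z : ℝ := x / t with hz_def
    have hz0 : 0 < z := div_pos hx ht0
    have hza : a ≤ z := by
      rw [hz_def, le_div_iff₀ ht0]
      nlinarith
    have hzx : z ≤ x := by
      rw [hz_def, div_le_iff₀ ht0]
      nlinarith
    have hLz1 : 1 ≤ L z := hL1 z hz0.le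
    have hLz0 : 0 < L z := by linarith
    have hLle : L z ≤ L x :=
      hx₀ (Set.mem_Ici.mpr (by linarith)) (Set.mem_Ici.mpr (by linarith)) hzx
    have hlogL : Real.log (L z) ≤ Real.log (L x) := Real.log_le_log hLz0 hLle
    have h1 := hΛ_ge z hz0
    have h2 : t * (z * Real.log r - z * Real.log (z * L z)) ≤ t * Λ r :=
      mul_le_mul_of_nonneg_left h1 ht0.le
    have e3 : Real.log (z * L z) = Real.log z + Real.log (L z) := Real.log_mul hz0.ne' hLz0.ne'
    have e4 : Real.log z = Real.log x - Real.log t := Real.log_div hx.ne' ht0.ne'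
    have e5 : t * z = x := by rw [hz_def]; field_simp
    rw [e3, e4, mul_sub, ← mul_assoc, ← mul_assoc, e5] at h2
    rw [e1, e2]
    linarith [h2, mul_le_mul_of_nonneg_left hlogL hx.le]
  · -- small x : direct bound
    replace hc : x < t * a := lt_of_not_ge hc
    have hΛr : a * Real.log r - a * Real.log a + a ≤ Λ r := by
      have hw := hΛ_ge (a + 1) (by linarith)
      rw [hK_def] at hlogr
      linarith
    have hlogLx : 0 ≤ Real.log (L x) := Real.log_nonneg hLx1
    have hloga_r : Real.log a ≤ Real.log r := Real.log_le_log ha0 har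
    have hta0 : 0 < t * a := mul_pos ht0 ha0
    have p1 : x * (Real.log r - Real.log a) ≤ t * a * (Real.log r - Real.log a) :=
      mul_le_mul_of_nonneg_right hc.le (by linarith)
    have hq : Real.log (t * a / x) ≤ t * a / x - 1 :=
      Real.log_le_sub_one_of_pos (by positivity)
    have p2 : x * Real.log (t * a / x) ≤ t * a - x := by
      have h := mul_le_mul_of_nonneg_left hq hx.le
      have hxx : x * (t * a / x) = t * a := by field_simp
      linarith [h, hxx, mul_sub x (t*a/x) 1]
    have e6 : Real.log (t * a / x) = Real.log t + Real.log a - Real.log x := by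
      rw [Real.log_div (ne_of_gt hta0) hx.ne', Real.log_mul ht0.ne' ha0.ne']
    rw [e6] at p2
    have h3 : t * (a * Real.log r - a * Real.log a + a) ≤ t * Λ r :=
      mul_le_mul_of_nonneg_left hΛr ht0.le
    rw [e1, e2]
    nlinarith [p1, p2, mul_nonneg hx.le hlogLx, h3, hx.le]
end

section
/- Let L : [0,∞) → [1,∞) be increasing with lim L = ∞ such that g_k(n) := n(log L(k) − log L(n)) is concave in n on [n₀, ∞) for each large k, and L is slowly varying (L(2ρ)/L(ρ) → 1). Then there is a constant C > 0 such that for all 0 ≤ n ≤ k, n(log L(k) − log L(n)) ≤ C(k + n). -/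
open Filter

private lemma stmt4_aux (a r k n : ℝ) (ha : 0 ≤ a) (hr : 1 ≤ r) (hk : 1 ≤ k) (hn : 0 ≤ n) :
    r*(a+2*k+1) ≤ (r*(a+3)+3)*(k+n) := by
  nlinarith [mul_nonneg (mul_nonneg (by linarith : (0:ℝ) ≤ r) ha) (sub_nonneg.mpr hk),
    mul_nonneg (by linarith : (0:ℝ) ≤ r) (sub_nonneg.mpr hk),
    mul_nonneg (mul_nonneg (by linarith : (0:ℝ) ≤ r) ha) hn,
    mul_nonneg (by linarith : (0:ℝ) ≤ r) hn]

theorem stmt4 (L : ℝ → ℝ)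
    (hL1 : ∀ x ≥ (0:ℝ), 1 ≤ L x)
    (hmono : MonotoneOn L (Set.Ici 0))
    (htend : Tendsto L atTop atTop)
    (hconc : ∃ n₀ k₀ : ℝ, ∀ k ≥ k₀, ConcaveOn ℝ (Set.Ici n₀)
        (fun n => n * (Real.log (L k) - Real.log (L n))))
    (hslow : Tendsto (fun ρ => L (2 * ρ) / L ρ) atTop (nhds 1)) :
    ∃ C > (0:ℝ), ∀ n k : ℝ, 0 ≤ n → n ≤ k →
      n * (Real.log (L k) - Real.log (L n)) ≤ C * (k + n) := by
  clear htend hconc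
  have hLpos : ∀ x, (0:ℝ) ≤ x → 0 < L x := fun x hx => lt_of_lt_of_le one_pos (hL1 x hx)
  have hlog0 : ∀ x, (0:ℝ) ≤ x → 0 ≤ Real.log (L x) := fun x hx => Real.log_nonneg (hL1 x hx)
  have he : (1:ℝ) < Real.exp 1 := by
    exact lt_trans (by norm_num) Real.exp_one_gt_d9
  have h1 : ∀ᶠ ρ in atTop, L (2*ρ)/L ρ ≤ Real.exp 1 := hslow.eventually (eventually_le_nhds he)
  obtain ⟨R₀, hR₀⟩ := eventually_atTop.mp h1
  set R := max R₀ 1 with hRdef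
  have hR1 : (1:ℝ) ≤ R := le_max_right _ _
  have hR0 : (0:ℝ) ≤ R := by linarith
  have hstep : ∀ ρ, R ≤ ρ → Real.log (L (2*ρ)) ≤ Real.log (L ρ) + 1 := by
    intro ρ hρ
    have hρ0 : (0:ℝ) ≤ ρ := le_trans hR0 hρ
    have h2ρ : (0:ℝ) ≤ 2*ρ := by linarith
    have hdiv := hR₀ ρ (le_trans (le_max_left _ _) hρ)
    have hle : L (2*ρ) ≤ Real.exp 1 * L ρ := by
      rw [div_le_iff₀ (hLpos ρ hρ0)] at hdiv
      linarith
    calc Real.log (L (2*ρ)) ≤ Real.log (Real.exp 1 * L ρ) :=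
          Real.log_le_log (hLpos _ h2ρ) hle
      _ = Real.log (L ρ) + 1 := by
          rw [Real.log_mul (Real.exp_pos 1).ne' (hLpos ρ hρ0).ne', Real.log_exp]; ring
  clear_value R
  have hpow : ∀ m : ℕ, ∀ ρ, R ≤ ρ → Real.log (L ((2:ℝ)^m * ρ)) ≤ Real.log (L ρ) + m := by
    intro m
    induction m with
    | zero => intro ρ hρ; simp
    | succ m ih =>
        intro ρ hρ
        have hρ0 : (0:ℝ) ≤ ρ := le_trans hR0 hρ
        have h2m : (1:ℝ) ≤ (2:ℝ)^m := one_le_pow₀ (by norm_num)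
        have hpm : R ≤ (2:ℝ)^m * ρ := by nlinarith [h2m, hρ, hρ0]
        have heq : (2:ℝ)^(m+1) * ρ = 2 * ((2:ℝ)^m * ρ) := by ring
        calc Real.log (L ((2:ℝ)^(m+1) * ρ)) = Real.log (L (2 * ((2:ℝ)^m * ρ))) := by rw [heq]
          _ ≤ Real.log (L ((2:ℝ)^m * ρ)) + 1 := hstep _ hpm
          _ ≤ Real.log (L ρ) + m + 1 := by linarith [ih ρ hρ]
          _ = Real.log (L ρ) + (m+1 : ℕ) := by push_cast; ring
  -- key doubling bound
  have hkey : ∀ x y : ℝ, R ≤ x → x ≤ y →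
      Real.log (L y) ≤ Real.log (L x) + (Real.log (y/x) / Real.log 2 + 1) := by
    intro x y hx hxy
    have hx0 : (0:ℝ) < x := lt_of_lt_of_le one_pos (le_trans hR1 hx)
    have hy0 : (0:ℝ) ≤ y := le_trans hx0.le hxy
    have hyx1 : (1:ℝ) ≤ y / x := (one_le_div hx0).mpr hxy
    have hlb0 : 0 ≤ Real.logb 2 (y/x) := Real.logb_nonneg (by norm_num) hyx1
    set m := ⌈Real.logb 2 (y/x)⌉₊ with hm
    have hmle : Real.logb 2 (y/x) ≤ (m:ℝ) := Nat.le_ceil _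
    have hylt : y ≤ (2:ℝ)^m * x := by
      have h2 : y / x ≤ (2:ℝ)^(m:ℝ) := by
        rw [← Real.rpow_logb (b := 2) (by norm_num) (by norm_num) (lt_of_lt_of_le one_pos hyx1)]
        exact Real.rpow_le_rpow_left_iff (by norm_num) |>.mpr hmle
      rw [Real.rpow_natCast] at h2
      calc y = (y/x) * x := by field_simp
        _ ≤ (2:ℝ)^m * x := by nlinarith
    have hmem1 : y ∈ Set.Ici (0:ℝ) := hy0
    have hmem2 : (2:ℝ)^m * x ∈ Set.Ici (0:ℝ) := by
      have h2m : (0:ℝ) < (2:ℝ)^m := by positivity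
      exact le_of_lt (mul_pos h2m hx0)
    have hmono' : L y ≤ L ((2:ℝ)^m * x) := hmono hmem1 hmem2 hylt
    have hmlt : (m:ℝ) < Real.logb 2 (y/x) + 1 := Nat.ceil_lt_add_one hlb0
    calc Real.log (L y) ≤ Real.log (L ((2:ℝ)^m * x)) :=
          Real.log_le_log (hLpos y hy0) hmono'
      _ ≤ Real.log (L x) + m := hpow m x hx
      _ ≤ Real.log (L x) + (Real.logb 2 (y/x) + 1) := by linarith
      _ = Real.log (L x) + (Real.log (y/x) / Real.log 2 + 1) := by rw [Real.logb]
  have hlog2 : (1:ℝ)/2 < Real.log 2 := by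
    have := Real.log_two_gt_d9; linarith
  set A := Real.log (L R) with hA
  have hA0 : 0 ≤ A := hlog0 R hR0
  clear_value A
  refine ⟨R * (A + 3) + 3, by nlinarith [mul_nonneg hR0 hA0], ?_⟩
  intro n k hn hnk
  have hk0 : (0:ℝ) ≤ k := le_trans hn hnk
  have hlogk0 := hlog0 k hk0
  have hlogn0 := hlog0 n hn
  set C := R * (A + 3) + 3 with hC
  have hC3 : (3:ℝ) ≤ C := by nlinarith [mul_nonneg hR0 hA0]
  clear_value C
  by_cases hcase : R ≤ n
  · -- n ≥ R : use hkey with x = n, y = k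
    have hn0 : (0:ℝ) < n := lt_of_lt_of_le one_pos (le_trans hR1 hcase)
    have h := hkey n k hcase hnk
    have hlogle : Real.log (k/n) ≤ k/n - 1 := Real.log_le_sub_one_of_pos (div_pos (lt_of_lt_of_le hn0 hnk) hn0)
    have hnlog : n * Real.log (k/n) ≤ k - n := by
      have := mul_le_mul_of_nonneg_left hlogle hn0.le
      calc n * Real.log (k/n) ≤ n * (k/n - 1) := this
        _ = k - n := by field_simp
    have hlognn : 0 ≤ Real.log (k/n) := Real.log_nonneg ((one_le_div hn0).mpr hnk)
    have hdivle : n * (Real.log (k/n) / Real.log 2) ≤ 2 * (k - n) := by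
      rw [mul_div_assoc'] -- n * log / log2
      rw [div_le_iff₀ (by linarith : (0:ℝ) < Real.log 2)]
      nlinarith
    have : n * (Real.log (L k) - Real.log (L n)) ≤ n * (Real.log (k/n) / Real.log 2 + 1) := by
      have h' : Real.log (L k) - Real.log (L n) ≤ Real.log (k/n) / Real.log 2 + 1 := by linarith
      exact mul_le_mul_of_nonneg_left h' hn
    calc n * (Real.log (L k) - Real.log (L n)) ≤ n * (Real.log (k/n) / Real.log 2 + 1) := this
      _ = n * (Real.log (k/n) / Real.log 2) + n := by ring
      _ ≤ 2 * (k - n) + n := by linarith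
      _ ≤ 3 * (k + n) := by linarith
      _ ≤ C * (k + n) := by nlinarith [mul_nonneg (sub_nonneg.mpr hC3) (by linarith : (0:ℝ) ≤ k + n)]
  · push_neg at hcase
    have hbase : n * (Real.log (L k) - Real.log (L n)) ≤ n * Real.log (L k) := by
      nlinarith [mul_nonneg hn hlogn0]
    by_cases hk : k ≤ R
    · -- small k
      have hLk : Real.log (L k) ≤ A := by
        rw [hA]; exact Real.log_le_log (hLpos k hk0) (hmono hk0 hR0 hk)
      calc n * (Real.log (L k) - Real.log (L n)) ≤ n * Real.log (L k) := hbase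
        _ ≤ n * A := mul_le_mul_of_nonneg_left hLk hn
        _ ≤ C * (k + n) := by
            have hAC : A ≤ C := by nlinarith [mul_nonneg hA0 (sub_nonneg.mpr hR1)]
            nlinarith [mul_le_mul_of_nonneg_left hAC hn, mul_nonneg (by linarith : (0:ℝ) ≤ C) hk0]
    · push_neg at hk
      have hk1 : (1:ℝ) ≤ k := le_trans hR1 hk.le
      have h : Real.log (L k) ≤ A + (Real.log (k/R) / Real.log 2 + 1) := by
        rw [hA]; exact hkey R k le_rfl hk.le
      have hR0' : (0:ℝ) < R := lt_of_lt_of_le one_pos hR1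
      have hlogle : Real.log (k/R) ≤ k/R - 1 := Real.log_le_sub_one_of_pos (div_pos (lt_trans hR0' hk) hR0')
      have hlognn : 0 ≤ Real.log (k/R) := Real.log_nonneg ((one_le_div hR0').mpr hk.le)
      have hdl : Real.log (k/R) / Real.log 2 ≤ 2 * Real.log (k/R) := by
        rw [div_le_iff₀ (by linarith : (0:ℝ) < Real.log 2)]
        nlinarith
      have hkR : Real.log (k/R) ≤ k := by
        have : k/R ≤ k := by
          rw [div_le_iff₀ hR0']; nlinarith
        linarith
      have hLk : Real.log (L k) ≤ A + 2*k + 1 := by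
        calc Real.log (L k) ≤ A + (Real.log (k/R) / Real.log 2 + 1) := h
          _ ≤ A + (2 * Real.log (k/R) + 1) := by linarith
          _ ≤ A + 2*k + 1 := by linarith
      calc n * (Real.log (L k) - Real.log (L n)) ≤ n * Real.log (L k) := hbase
        _ ≤ n * (A + 2*k + 1) := mul_le_mul_of_nonneg_left hLk hn
        _ ≤ R * (A + 2*k + 1) := by
            exact mul_le_mul_of_nonneg_right hcase.le (by linarith)
        _ ≤ C * (k + n) := by
            rw [hC]
            exact stmt4_aux A R k n hA0 hR1 hk1 hn
end

section
/- Let L : [0,∞) → [1,∞) be continuous, increasing, unbounded and slowly varying, with inverse L^{-1} defined on [C,∞). Define E(r) = Σ_{n≥0} r^n / L(n+1)^{n+1}. Then for any 0 < η < 1 there exists a constant C_η such that L^{-1}(η r) ≤ C_η · (log E(r) + 1) for all r large enough. -/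
open Filter

lemma aux_slow (L : ℝ → ℝ)
    (hL1 : ∀ x ≥ (0:ℝ), 1 ≤ L x)
    (hcont : Continuous L)
    (hdiff : Differentiable ℝ L)
    (hslow : Tendsto (fun ρ => ρ * deriv L ρ / L ρ) atTop (nhds 0)) :
    ∀ c : ℝ, 1 < c → ∃ R : ℝ, 1 ≤ R ∧ ∀ ρ ≥ R, L (ρ + 2) ≤ c * L ρ := by
  intro c hc
  have hδ : 0 < Real.log c / 2 := by
    have := Real.log_pos hc; linarith
  set δ := Real.log c / 2 with hδdef
  have h : ∀ᶠ x in atTop, |x * deriv L x / L x - 0| < δ :=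
    hslow.eventually (eventually_abs_sub_lt 0 hδ)
  obtain ⟨R0, hR0⟩ := eventually_atTop.mp h
  refine ⟨max R0 1, le_max_right _ _, ?_⟩
  intro ρ hρ
  have hρ1 : (1:ℝ) ≤ ρ := le_trans (le_max_right _ _) hρ
  have hρR0 : R0 ≤ ρ := le_trans (le_max_left _ _) hρ
  have hLpos : ∀ x ∈ Set.Icc ρ (ρ + 2), 0 < L x := fun x hx =>
    lt_of_lt_of_le one_pos (hL1 x (by have := hx.1; linarith))
  have hderiv : ∀ x ∈ Set.Ioo ρ (ρ + 2),
      HasDerivAt (fun y => Real.log (L y)) (deriv L x / L x) x := by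
    intro x hx
    have hx0 : 0 < L x := hLpos x ⟨hx.1.le, hx.2.le⟩
    exact ((hdiff x).hasDerivAt).log hx0.ne'
  have hcontOn : ContinuousOn (fun y => Real.log (L y)) (Set.Icc ρ (ρ + 2)) :=
    ContinuousOn.log hcont.continuousOn (fun x hx => (hLpos x hx).ne')
  obtain ⟨x, hx, hxeq⟩ := exists_hasDerivAt_eq_slope (fun y => Real.log (L y))
      (fun x => deriv L x / L x) (by linarith : ρ < ρ + 2) hcontOn hderiv
  have hx1 : (1:ℝ) ≤ x := le_trans hρ1 hx.1.le
  have hxR0 : R0 ≤ x := le_trans hρR0 hx.1.le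
  have hbound : |x * deriv L x / L x - 0| < δ := hR0 x hxR0
  rw [sub_zero] at hbound
  have hLx : 0 < L x := hLpos x ⟨hx.1.le, hx.2.le⟩
  have hd : deriv L x / L x ≤ δ := by
    have h1 : x * deriv L x / L x ≤ δ := le_trans (le_abs_self _) hbound.le
    have h2 : deriv L x / L x = (x * deriv L x / L x) / x := by
      field_simp
    rw [h2]
    calc (x * deriv L x / L x) / x ≤ δ / x := by
          apply div_le_div_of_nonneg_right h1 (by linarith) |>.trans_eq rfl
      _ ≤ δ / 1 := by
          apply div_le_div_of_nonneg_left hδ.le one_pos hx1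
      _ = δ := div_one δ
  have hslope : Real.log (L (ρ + 2)) - Real.log (L ρ) ≤ Real.log c := by
    have : (Real.log (L (ρ + 2)) - Real.log (L ρ)) / 2 ≤ δ := by
      have h3 : (fun y => Real.log (L y)) (ρ + 2) - (fun y => Real.log (L y)) ρ
          = Real.log (L (ρ + 2)) - Real.log (L ρ) := rfl
      have h4 : (ρ + 2 - ρ : ℝ) = 2 := by ring
      rw [h4] at hxeq
      rw [hxeq] at hd
      exact hd
    linarith [this]
  have hLρ : 0 < L ρ := hLpos ρ ⟨le_refl _, by linarith⟩
  have hLρ2 : 0 < L (ρ + 2) := hLpos (ρ + 2) ⟨by linarith, le_refl _⟩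
  have : Real.log (L (ρ + 2)) ≤ Real.log (c * L ρ) := by
    rw [Real.log_mul (by linarith : c ≠ 0) hLρ.ne']
    linarith
  exact (Real.log_le_log_iff hLρ2 (by positivity)).mp this

lemma aux_summable (L : ℝ → ℝ)
    (hL1 : ∀ x ≥ (0:ℝ), 1 ≤ L x)
    (htend : Tendsto L atTop atTop)
    (r : ℝ) (hr : 1 ≤ r) :
    Summable (fun n : ℕ => r ^ n / L (n + 1) ^ (n + 1)) := by
  have hr0 : (0:ℝ) < r := by linarith
  have hcast : Tendsto (fun n : ℕ => (n:ℝ) + 1) atTop atTop :=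
    tendsto_atTop_add_const_right _ 1 tendsto_natCast_atTop_atTop
  have hev : ∀ᶠ n : ℕ in atTop, 2 * r ≤ L ((n:ℝ) + 1) :=
    hcast.eventually (htend.eventually (eventually_ge_atTop (2 * r)))
  obtain ⟨N, hN⟩ := eventually_atTop.mp hev
  rw [← summable_nat_add_iff N]
  refine Summable.of_nonneg_of_le ?_ ?_
    (summable_geometric_of_lt_one (r := (1/2:ℝ)) (by norm_num) (by norm_num))
  · intro n
    have h1 : (1:ℝ) ≤ L ((n + N : ℕ) + 1) := hL1 _ (by positivity)
    positivity
  · intro n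
    set m := n + N with hm
    have hge : 2 * r ≤ L ((m : ℝ) + 1) := hN m (Nat.le_add_left N n)
    have h2r : (1:ℝ) ≤ 2 * r := by linarith
    have hpow : (2 * r) ^ (m + 1) ≤ L ((m : ℝ) + 1) ^ (m + 1) :=
      pow_le_pow_left₀ (by linarith) hge _
    calc r ^ m / L ((m : ℝ) + 1) ^ (m + 1)
        ≤ r ^ m / (2 * r) ^ (m + 1) := by
          apply div_le_div_of_nonneg_left (by positivity) (by positivity) hpow
      _ ≤ r ^ m / (2 * r) ^ m := by
          apply div_le_div_of_nonneg_left (by positivity) (by positivity)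
          exact pow_le_pow_right₀ h2r (Nat.le_succ m)
      _ = (1/2 : ℝ) ^ m := by
          rw [← div_pow]
          congr 1
          field_simp
      _ ≤ (1/2 : ℝ) ^ n :=
          pow_le_pow_of_le_one (by norm_num) (by norm_num) (Nat.le_add_right n N)


theorem stmt6 (L Linv E : ℝ → ℝ)
    (hL1 : ∀ x ≥ (0:ℝ), 1 ≤ L x)
    (hcont : Continuous L)
    (hmono : MonotoneOn L (Set.Ici 0))
    (htend : Tendsto L atTop atTop)
    (hdiff : Differentiable ℝ L)
    (hslow : Tendsto (fun ρ => ρ * deriv L ρ / L ρ) atTop (nhds 0))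
    (hE : ∀ r, E r = ∑' n : ℕ, r ^ n / L (n + 1) ^ (n + 1))
    (hLinv : ∀ᶠ r in atTop, L (Linv r) = r) :
    ∀ η : ℝ, 0 < η → η < 1 → ∃ C : ℝ, ∀ᶠ r in atTop,
      Linv (η * r) ≤ C * (Real.log (E r) + 1) := by
  intro η hη0 hη1
  set q : ℝ := (1 + η) / 2 with hqdef
  have hq0 : 0 < q := by rw [hqdef]; linarith
  have hηq : η < q := by rw [hqdef]; linarith
  have hq1 : q < 1 := by rw [hqdef]; linarith
  have hc1 : 1 < q / η := (one_lt_div hη0).2 hηq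
  obtain ⟨R, hR1, hR⟩ := aux_slow L hL1 hcont hdiff hslow (q / η) hc1
  set a : ℝ := -Real.log q with ha
  have ha0 : 0 < a := by
    rw [ha]; simpa using Real.log_neg hq0 hq1
  set K : ℝ := 2 * Real.log (L 2) with hKdef
  have hK0 : 0 ≤ K := mul_nonneg (by norm_num) (Real.log_nonneg (hL1 2 (by norm_num)))
  refine ⟨2 / a * (K + 1), ?_⟩
  have hηr : Tendsto (fun r => η * r) atTop atTop :=
    Tendsto.const_mul_atTop hη0 tendsto_id
  have ev1 : ∀ᶠ r in atTop, L (Linv (η * r)) = η * r := hηr.eventually hLinv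
  have ev2 : ∀ᶠ r in atTop, L R < η * r := hηr.eventually (eventually_gt_atTop (L R))
  have ev3 : ∀ᶠ r in atTop, Real.exp K ≤ r := eventually_ge_atTop _
  have ev4 : ∀ᶠ r in atTop, (1:ℝ) ≤ r := eventually_ge_atTop 1
  filter_upwards [ev1, ev2, ev3, ev4] with r h1 h2 h3 h4
  have hr0 : (0:ℝ) < r := by linarith
  have hsum := aux_summable L hL1 htend r h4
  have hterm_nonneg : ∀ m : ℕ, 0 ≤ r ^ m / L (m + 1) ^ (m + 1) := by
    intro m
    have h5 : (1:ℝ) ≤ L ((m:ℝ) + 1) := hL1 _ (by positivity)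
    positivity
  have hL2pos : (0:ℝ) < L 2 := lt_of_lt_of_le one_pos (hL1 2 (by norm_num))
  have hE1 : r / L 2 ^ 2 ≤ E r := by
    rw [hE]
    have h5 := Summable.le_tsum hsum 1 (fun m _ => hterm_nonneg m)
    norm_num at h5
    convert h5 using 2 <;> norm_num
  have hEpos : 0 < E r := lt_of_lt_of_le (by positivity) hE1
  have hlogr : Real.log r ≤ Real.log (E r) + K := by
    have h5 : Real.log (r / L 2 ^ 2) ≤ Real.log (E r) :=
      Real.log_le_log (by positivity) hE1
    rw [Real.log_div hr0.ne' (by positivity), Real.log_pow] at h5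
    rw [hKdef]
    push_cast at h5
    linarith
  have hlogE0 : 0 ≤ Real.log (E r) := by
    have h5 : K ≤ Real.log r := by
      rw [← Real.log_exp K]
      exact Real.log_le_log (Real.exp_pos K) h3
    linarith
  by_cases hρ0 : Linv (η * r) < 0
  · have h5 : 0 ≤ 2 / a * (K + 1) * (Real.log (E r) + 1) := by
      apply mul_nonneg (mul_nonneg (by positivity) (by linarith)) (by linarith)
    linarith
  push_neg at hρ0
  set ρ := Linv (η * r) with hρdef
  have hρR : R ≤ ρ := by
    by_contra hcon
    push_neg at hcon
    have h5 : L ρ ≤ L R :=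
      hmono (Set.mem_Ici.mpr hρ0) (Set.mem_Ici.mpr (le_trans zero_le_one hR1)) hcon.le
    rw [h1] at h5
    linarith
  set n : ℕ := ⌈ρ⌉₊ with hn
  have hnρ : ρ ≤ (n:ℝ) := Nat.le_ceil ρ
  have hn1 : (n:ℝ) + 1 ≤ ρ + 2 := by
    have := Nat.ceil_lt_add_one hρ0
    rw [← hn] at this
    linarith
  have hslowb : L (ρ + 2) ≤ q / η * L ρ := hR ρ hρR
  have hLn : L ((n:ℝ) + 1) ≤ q * r := by
    have hmon : L ((n:ℝ) + 1) ≤ L (ρ + 2) :=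
      hmono (Set.mem_Ici.mpr (by positivity)) (Set.mem_Ici.mpr (by linarith)) hn1
    have heq : q / η * L ρ = q * r := by
      rw [h1]; field_simp
    linarith
  have hLn1 : (1:ℝ) ≤ L ((n:ℝ) + 1) := hL1 _ (by positivity)
  have hqr1 : (1:ℝ) ≤ q * r := le_trans hLn1 hLn
  have hterm : r ^ n / (q * r) ^ (n + 1) ≤ E r := by
    rw [hE]
    refine le_trans ?_ (Summable.le_tsum hsum n fun m _ => hterm_nonneg m)
    apply div_le_div_of_nonneg_left (by positivity) (by positivity)
    exact pow_le_pow_left₀ (by positivity) hLn _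
  have hlogT : ρ * a - Real.log r ≤ Real.log (E r) := by
    have h5 : Real.log (r ^ n / (q * r) ^ (n + 1)) ≤ Real.log (E r) :=
      Real.log_le_log (by positivity) hterm
    rw [Real.log_div (by positivity) (by positivity), Real.log_pow, Real.log_pow,
      Real.log_mul hq0.ne' hr0.ne'] at h5
    have h6 : ρ * a ≤ ((n:ℝ) + 1) * a := by
      apply mul_le_mul_of_nonneg_right (by linarith) ha0.le
    have h7 : ((n:ℝ) + 1) * a - Real.log r
        = (n:ℕ) * Real.log r - ((n:ℕ) + 1 : ℕ) * (Real.log q + Real.log r) := by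
      push_cast
      rw [ha]
      ring
    linarith [h7 ▸ h5]
  have key : ρ * a ≤ 2 * (K + 1) * (Real.log (E r) + 1) := by
    by_cases hcase : Real.log r ≤ ρ * a / 2
    · nlinarith [mul_nonneg hK0 hlogE0]
    · push_neg at hcase
      nlinarith [mul_nonneg hK0 hlogE0]
  rw [div_mul_eq_mul_div, div_mul_eq_mul_div, le_div_iff₀ ha0]
  linarith
end

section
/- Let L : [0,∞) → [1,∞) be continuous, increasing, unbounded and slowly varying (ρL'(ρ)/L(ρ) → 0). Define E(r) = Σ_{n≥0} r^n / L(n+1)^{n+1}. Then for every δ > 0 there exists C_δ such that E(r)² ≤ C_δ · E((1+δ)r) for all r > 0. -/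
open Filter

set_option maxHeartbeats 1000000 in
theorem stmt7 (L E : ℝ → ℝ)
    (hL1 : ∀ x ≥ (0:ℝ), 1 ≤ L x)
    (hcont : Continuous L)
    (hmono : MonotoneOn L (Set.Ici 0))
    (htend : Tendsto L atTop atTop)
    (hdiff : Differentiable ℝ L)
    (hslow : Tendsto (fun ρ => ρ * deriv L ρ / L ρ) atTop (nhds 0))
    (hE : ∀ r, E r = ∑' n : ℕ, r ^ n / L (n + 1) ^ (n + 1)) :
    ∀ δ > (0:ℝ), ∃ C : ℝ, ∀ r > (0:ℝ), E r ^ 2 ≤ C * E ((1 + δ) * r) := by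
  have hLpos : ∀ x ≥ (0:ℝ), 0 < L x := fun x hx => lt_of_lt_of_le one_pos (hL1 x hx)
  -- summability of the series for positive arguments
  have hSum : ∀ r : ℝ, 0 < r → Summable (fun n : ℕ => r ^ n / L (n + 1) ^ (n + 1)) := by
    intro r hr
    apply summable_of_ratio_norm_eventually_le (r := 1/2) (by norm_num)
    obtain ⟨M, hM⟩ := eventually_atTop.mp (htend.eventually_ge_atTop (2*r))
    rw [eventually_atTop]
    refine ⟨⌈M⌉₊, fun n hn => ?_⟩
    have hMn : M ≤ (n:ℝ) + 2 := by
      have h1 : M ≤ (⌈M⌉₊ : ℝ) := Nat.le_ceil M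
      have h2 : (⌈M⌉₊ : ℝ) ≤ (n : ℝ) := by exact_mod_cast hn
      linarith
    have hL2r : 2*r ≤ L ((n:ℝ)+2) := hM _ hMn
    have hLn1 : 0 < L ((n:ℝ)+1) := hLpos _ (by positivity)
    have hLn2 : 0 < L ((n:ℝ)+2) := hLpos _ (by positivity)
    have hle : L ((n:ℝ)+1) ≤ L ((n:ℝ)+2) := hmono (Set.mem_Ici.mpr (by positivity)) (Set.mem_Ici.mpr (by positivity)) (by linarith)
    have e1 : (((n+1:ℕ)):ℝ) + 1 = (n:ℝ) + 2 := by push_cast; ring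
    have hpos1 : 0 < r ^ (n+1) / L ((n:ℝ)+2) ^ (n+2) := by positivity
    have hpos2 : 0 < r ^ n / L ((n:ℝ)+1) ^ (n+1) := by positivity
    simp only [Real.norm_eq_abs, e1]
    rw [abs_of_pos hpos1, abs_of_pos hpos2]
    have efact : r ^ (n+1) / L ((n:ℝ)+2) ^ (n+2) =
        (r / L ((n:ℝ)+2)) * (r ^ n / L ((n:ℝ)+2) ^ (n+1)) := by
      rw [pow_succ r n, pow_succ (L ((n:ℝ)+2)) (n+1)]
      field_simp
    rw [efact]
    have h1 : r / L ((n:ℝ)+2) ≤ 1/2 := by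
      rw [div_le_iff₀ hLn2]; linarith
    have h2 : r ^ n / L ((n:ℝ)+2) ^ (n+1) ≤ r ^ n / L ((n:ℝ)+1) ^ (n+1) := by
      apply div_le_div_of_nonneg_left (by positivity) (by positivity)
      exact pow_le_pow_left₀ hLn1.le hle _
    calc (r / L ((n:ℝ)+2)) * (r ^ n / L ((n:ℝ)+2) ^ (n+1))
        ≤ (1/2) * (r ^ n / L ((n:ℝ)+1) ^ (n+1)) := by
          apply mul_le_mul h1 h2 (by positivity) (by norm_num)
      _ = 1/2 * (r ^ n / L ((n:ℝ)+1) ^ (n+1)) := by ring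
  intro δ hδ
  have hδ1 : (0:ℝ) < 1 + δ := by linarith
  have hlog1δ : 0 < Real.log (1+δ) := Real.log_pos (by linarith)
  set η : ℝ := min 1 (Real.log (1+δ) / 3) with hηdef
  have hη0 : 0 < η := lt_min one_pos (by positivity)
  have hη1 : η ≤ 1 := min_le_left _ _
  have hη3 : 3 * η ≤ Real.log (1+δ) := by
    have h := min_le_right 1 (Real.log (1+δ)/3)
    have : η ≤ Real.log (1+δ)/3 := h
    linarith
  clear_value η
  obtain ⟨A₀, hA₀⟩ := eventually_atTop.mp (hslow.eventually (gt_mem_nhds hη0))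
  set A : ℝ := max 3 (max A₀ (1/η)) with hAdef
  have hA3 : (3:ℝ) ≤ A := le_max_left _ _
  have hA1 : (1:ℝ) ≤ A := by linarith
  have hA0 : (0:ℝ) < A := by linarith
  have hAinv : 1/A ≤ η := by
    have h1 : 1/η ≤ A := le_trans (le_max_right _ _) (le_max_right _ _)
    rw [div_le_iff₀ hA0]
    rw [div_le_iff₀ hη0] at h1
    nlinarith
  have hε : ∀ u, A ≤ u → u * deriv L u / L u ≤ η := by
    intro u hu
    have : A₀ ≤ u := le_trans (le_trans (le_max_left _ _) (le_max_right _ _)) hu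
    exact (hA₀ u this).le
  clear_value A
  -- log-of-L comparison lemma via derivative
  have key1 : ∀ a b : ℝ, A ≤ a → a ≤ b →
      Real.log (L b) ≤ Real.log (L a) + η * (Real.log b - Real.log a) := by
    have hg : ∀ x ∈ Set.Ici A, HasDerivAt (fun t => η * Real.log t - Real.log (L t))
        (η * x⁻¹ - deriv L x / L x) x := by
      intro x hx
      have hx0 : 0 < x := lt_of_lt_of_le hA0 hx
      have hLx : L x ≠ 0 := ne_of_gt (hLpos x hx0.le)
      exact ((Real.hasDerivAt_log hx0.ne').const_mul η).sub (((hdiff x).hasDerivAt).log hLx)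
    have hmono2 : MonotoneOn (fun t => η * Real.log t - Real.log (L t)) (Set.Ici A) := by
      apply monotoneOn_of_deriv_nonneg (convex_Ici A)
      · intro x hx
        exact ((hg x hx).continuousAt).continuousWithinAt
      · intro x hx
        rw [interior_Ici] at hx
        exact ((hg x (Set.mem_Ici.mpr (le_of_lt hx))).differentiableAt).differentiableWithinAt
      · intro x hx
        rw [interior_Ici] at hx
        have hx0 : 0 < x := lt_of_le_of_lt hA0.le hx
        have hLx : 0 < L x := hLpos x hx0.le
        rw [(hg x (Set.mem_Ici.mpr hx.le)).deriv]
        have h2 : x * deriv L x ≤ η * L x := (div_le_iff₀ hLx).mp (hε x hx.le)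
        rw [sub_nonneg]
        rw [div_le_iff₀ hLx]
        have hxinv : x⁻¹ = 1 / x := (one_div x).symm
        rw [hxinv]
        rw [mul_one_div, div_mul_eq_mul_div, le_div_iff₀ hx0]
        nlinarith
    intro a b ha hab
    have h := hmono2 (Set.mem_Ici.mpr ha) (Set.mem_Ici.mpr (ha.trans hab)) hab
    simp only at h
    nlinarith [h]
  -- elementary log bound
  have hloglin : ∀ x c : ℝ, 0 < x → 0 < c → Real.log x ≤ x / c + Real.log c := by
    intro x c hx hc
    have h1 : Real.log (x/c) ≤ x/c - 1 := Real.log_le_sub_one_of_pos (by positivity)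
    rw [Real.log_div (ne_of_gt hx) (ne_of_gt hc)] at h1
    linarith
  set K : ℝ := A * Real.log (L A) + 2*A*Real.log A + 2*A*Real.log (L (2*A))
      + Real.log (2*A) with hKdef
  set c : ℝ := K + 3 with hcdef
  set C : ℝ := Real.exp c with hCdef
  clear_value K c C
  -- main log inequality
  have keylog : ∀ s t : ℝ, 1 ≤ s → s ≤ t →
      Real.log (s+t-1) + (s+t-1) * Real.log (L (s+t-1)) ≤
        s * Real.log (L s) + t * Real.log (L t) + (s+t-2) * Real.log (1+δ) + c := by
    intro s t hs1 hst
    set R := s + t - 1 with hR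
    clear_value R
    have ht1 : 1 ≤ t := hs1.trans hst
    have hs0 : 0 < s := by linarith
    have ht0 : 0 < t := by linarith
    have htR : t ≤ R := by rw [hR]; linarith
    have hR1 : 1 ≤ R := by linarith
    have hR0 : 0 < R := by linarith
    have hR2t : R ≤ 2*t := by rw [hR]; linarith
    have hls : 0 ≤ Real.log (L s) := Real.log_nonneg (hL1 s hs0.le)
    have hlt : 0 ≤ Real.log (L t) := Real.log_nonneg (hL1 t ht0.le)
    have hlR : 0 ≤ Real.log (L R) := Real.log_nonneg (hL1 R hR0.le)
    have hlogA0 : 0 ≤ Real.log A := Real.log_nonneg hA1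
    have hlLA : 0 ≤ Real.log (L A) := Real.log_nonneg (hL1 A hA0.le)
    have hlL2A : 0 ≤ Real.log (L (2*A)) := Real.log_nonneg (hL1 _ (by linarith))
    have hlog2A : 0 ≤ Real.log (2*A) := Real.log_nonneg (by linarith)
    have hst2 : 0 ≤ s + t - 2 := by linarith
    have hRHSd : 0 ≤ (s+t-2) * Real.log (1+δ) := mul_nonneg hst2 hlog1δ.le
    have hsls : 0 ≤ s * Real.log (L s) := mul_nonneg hs0.le hls
    have htlt : 0 ≤ t * Real.log (L t) := mul_nonneg ht0.le hlt
    have hAlLA : 0 ≤ A * Real.log (L A) := mul_nonneg hA0.le hlLA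
    have hAlogA : 0 ≤ A * Real.log A := mul_nonneg hA0.le hlogA0
    have hK1 : 0 ≤ 2*A*Real.log (L (2*A)) := mul_nonneg (by linarith) hlL2A
    by_cases htA : t < A
    · have hR2A : R ≤ 2*A := by linarith
      have h1 : Real.log (L R) ≤ Real.log (L (2*A)) := by
        apply Real.log_le_log (hLpos R hR0.le)
        exact hmono (Set.mem_Ici.mpr hR0.le) (Set.mem_Ici.mpr (by linarith)) hR2A
      have h2 : R * Real.log (L R) ≤ 2*A*Real.log (L (2*A)) :=
        mul_le_mul hR2A h1 hlR (by linarith)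
      have h3 : Real.log R ≤ Real.log (2*A) := Real.log_le_log hR0 hR2A
      linarith
    · push_neg at htA
      have hAR : A ≤ R := htA.trans htR
      -- t-side
      have ht1' := key1 t R htA htR
      have hlog2 : Real.log 2 ≤ 1 := by
        linarith [Real.log_le_sub_one_of_pos (show (0:ℝ) < 2 by norm_num)]
      have hRlog : Real.log R ≤ Real.log 2 + Real.log t := by
        have h := Real.log_le_log hR0 hR2t
        rw [Real.log_mul two_ne_zero ht0.ne'] at h
        linarith
      have hlRt : Real.log (L R) ≤ Real.log (L t) + η := by
        have hp : η * (Real.log R - Real.log t) ≤ η * 1 :=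
          mul_le_mul_of_nonneg_left (by linarith) hη0.le
        linarith [ht1']
      have ht2 : t * Real.log (L R) ≤ t * Real.log (L t) + η * R := by
        have h := mul_le_mul_of_nonneg_left hlRt ht0.le
        have h2 : t * η ≤ R * η := mul_le_mul_of_nonneg_right htR hη0.le
        linarith
      -- s-side
      have hs2 : s * Real.log (L R) ≤ s * Real.log (L s) + η * R
          + (A * Real.log (L A) + A * Real.log A) := by
        by_cases hsA : A ≤ s
        · have h := key1 s R hsA (by linarith)
          have h4 := hloglin R s hR0 hs0
          have h5 : s * (Real.log R - Real.log s) ≤ R := by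
            have h6 : Real.log R - Real.log s ≤ R/s := by linarith
            calc s * (Real.log R - Real.log s) ≤ s * (R/s) :=
                  mul_le_mul_of_nonneg_left h6 hs0.le
              _ = R := by field_simp
          have h7 := mul_le_mul_of_nonneg_left h hs0.le
          have h8 : η * (s * (Real.log R - Real.log s)) ≤ η * R :=
            mul_le_mul_of_nonneg_left h5 hη0.le
          linarith
        · push_neg at hsA
          have h6 : s * Real.log (L R) ≤ A * Real.log (L R) :=
            mul_le_mul_of_nonneg_right hsA.le hlR
          have h7 := key1 A R le_rfl hAR
          have h8 := hloglin R A hR0 hA0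
          have h9 : A * (Real.log R - Real.log A) ≤ R := by
            have h10 : Real.log R - Real.log A ≤ R/A := by linarith
            calc A * (Real.log R - Real.log A) ≤ A * (R/A) :=
                  mul_le_mul_of_nonneg_left h10 hA0.le
              _ = R := by field_simp
          have h11 := mul_le_mul_of_nonneg_left h7 hA0.le
          have h12 : η * (A * (Real.log R - Real.log A)) ≤ η * R :=
            mul_le_mul_of_nonneg_left h9 hη0.le
          linarith
      have hlogR : Real.log R ≤ η * R + Real.log A := by
        have h8 := hloglin R A hR0 hA0
        have h9 : R / A ≤ η * R := by
          rw [div_le_iff₀ hA0]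
          have h10 : 1 ≤ η * A := by
            rw [div_le_iff₀ hA0] at hAinv; linarith
          have h11 : R * 1 ≤ R * (η * A) := mul_le_mul_of_nonneg_left h10 hR0.le
          linarith
        linarith
      have hcomb : R * Real.log (L R) ≤ s * Real.log (L R) + t * Real.log (L R) := by
        have h := mul_le_mul_of_nonneg_right (show R ≤ s + t by rw [hR]; linarith) hlR
        linarith
      have h3η : (s+t-2) * (3*η) ≤ (s+t-2) * Real.log (1+δ) :=
        mul_le_mul_of_nonneg_left hη3 hst2
      have hηR3 : η * R = η * (s+t-2) + η := by rw [hR]; ring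
      have hlogAA : Real.log A ≤ A * Real.log A := by
        have := mul_le_mul_of_nonneg_right hA1 hlogA0
        linarith
      linarith
  -- exponentiated, ℕ-indexed version
  have keyN : ∀ m n : ℕ, (((m+n:ℕ):ℝ)+1) * L (((m+n:ℕ):ℝ)+1) ^ ((m+n)+1) ≤
      C * (1+δ)^(m+n) * (L ((m:ℝ)+1) ^ (m+1) * L ((n:ℝ)+1) ^ (n+1)) := by
    have hC0 : 0 < C := by rw [hCdef]; exact Real.exp_pos c
    have main : ∀ m n : ℕ, m ≤ n → (((m+n:ℕ):ℝ)+1) * L (((m+n:ℕ):ℝ)+1) ^ ((m+n)+1) ≤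
        C * (1+δ)^(m+n) * (L ((m:ℝ)+1) ^ (m+1) * L ((n:ℝ)+1) ^ (n+1)) := by
      intro m n hmn
      have h := keylog ((m:ℝ)+1) ((n:ℝ)+1)
        (by have : (0:ℝ) ≤ (m:ℝ) := Nat.cast_nonneg m; linarith)
        (by have : (m:ℝ) ≤ (n:ℝ) := by exact_mod_cast hmn
            linarith)
      have e1 : ((m:ℝ)+1) + ((n:ℝ)+1) - 1 = ((m+n:ℕ):ℝ)+1 := by push_cast; ring
      have e2 : ((m:ℝ)+1) + ((n:ℝ)+1) - 2 = ((m+n:ℕ):ℝ) := by push_cast; ring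
      rw [e1, e2] at h
      have hP0 : (0:ℝ) < ((m+n:ℕ):ℝ)+1 := by positivity
      have hLP : 0 < L (((m+n:ℕ):ℝ)+1) := hLpos _ (by positivity)
      have hLm : 0 < L ((m:ℝ)+1) := hLpos _ (by positivity)
      have hLn : 0 < L ((n:ℝ)+1) := hLpos _ (by positivity)
      have hB : (0:ℝ) < (1+δ)^(m+n) := pow_pos hδ1 _
      have hX : 0 < L ((m:ℝ)+1)^(m+1) := pow_pos hLm _
      have hY : 0 < L ((n:ℝ)+1)^(n+1) := pow_pos hLn _
      have hPP : 0 < L (((m+n:ℕ):ℝ)+1) ^ ((m+n)+1) := pow_pos hLP _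
      rw [← Real.log_le_log_iff (mul_pos hP0 hPP)
        (mul_pos (mul_pos hC0 hB) (mul_pos hX hY))]
      rw [Real.log_mul hP0.ne' hPP.ne', Real.log_pow,
        Real.log_mul (mul_pos hC0 hB).ne' (mul_pos hX hY).ne',
        Real.log_mul hC0.ne' hB.ne', Real.log_mul hX.ne' hY.ne',
        Real.log_pow, Real.log_pow, Real.log_pow, hCdef, Real.log_exp]
      push_cast
      push_cast at h
      linarith
    intro m n
    rcases le_total m n with hmn|hmn
    · exact main m n hmn
    · have h := main n m hmn
      rw [Nat.add_comm n m] at h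
      rw [show L ((m:ℝ)+1)^(m+1) * L ((n:ℝ)+1)^(n+1)
          = L ((n:ℝ)+1)^(n+1) * L ((m:ℝ)+1)^(m+1) from mul_comm _ _]
      exact h
  have hC0 : 0 < C := by rw [hCdef]; exact Real.exp_pos c
  refine ⟨C, fun r hr => ?_⟩
  have hr1 : 0 < (1+δ)*r := mul_pos hδ1 hr
  have hf : Summable (fun n : ℕ => r^n / L ((n:ℝ)+1)^(n+1)) := hSum r hr
  have hg : Summable (fun n : ℕ => ((1+δ)*r)^n / L ((n:ℝ)+1)^(n+1)) := hSum _ hr1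
  have hfn : Summable (fun n : ℕ => ‖r^n / L ((n:ℝ)+1)^(n+1)‖) := by
    simpa only [Real.norm_eq_abs] using hf.abs
  have hcauchy := tsum_mul_tsum_eq_tsum_sum_antidiagonal_of_summable_norm hfn hfn
  have hbound : ∀ N : ℕ, ∑ kl ∈ Finset.HasAntidiagonal.antidiagonal N,
      (r^kl.1 / L ((kl.1:ℝ)+1)^(kl.1+1)) * (r^kl.2 / L ((kl.2:ℝ)+1)^(kl.2+1)) ≤
      C * (((1+δ)*r)^N / L ((N:ℝ)+1)^(N+1)) := by
    intro N
    have hLN : 0 < L ((N:ℝ)+1) := hLpos _ (by positivity)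
    have hLNp : 0 < L ((N:ℝ)+1)^(N+1) := pow_pos hLN _
    have hN1 : (0:ℝ) < (N:ℝ)+1 := by positivity
    calc ∑ kl ∈ Finset.HasAntidiagonal.antidiagonal N,
        (r^kl.1 / L ((kl.1:ℝ)+1)^(kl.1+1)) * (r^kl.2 / L ((kl.2:ℝ)+1)^(kl.2+1))
        ≤ ∑ kl ∈ Finset.HasAntidiagonal.antidiagonal N,
          C * (1+δ)^N * r^N / (((N:ℝ)+1) * L ((N:ℝ)+1)^(N+1)) := by
          apply Finset.sum_le_sum
          intro kl hkl
          have hsum : kl.1 + kl.2 = N := Finset.HasAntidiagonal.mem_antidiagonal.mp hkl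
          have h := keyN kl.1 kl.2
          rw [hsum] at h
          have hLm : 0 < L ((kl.1:ℝ)+1) := hLpos _ (by positivity)
          have hLn : 0 < L ((kl.2:ℝ)+1) := hLpos _ (by positivity)
          have hx : 0 < L ((kl.1:ℝ)+1)^(kl.1+1) * L ((kl.2:ℝ)+1)^(kl.2+1) := by positivity
          have hy : 0 < ((N:ℝ)+1) * L ((N:ℝ)+1)^(N+1) := by positivity
          have hdiv : 1 / (L ((kl.1:ℝ)+1)^(kl.1+1) * L ((kl.2:ℝ)+1)^(kl.2+1)) ≤
              C * (1+δ)^N / (((N:ℝ)+1) * L ((N:ℝ)+1)^(N+1)) := by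
            rw [div_le_div_iff₀ hx hy]
            calc (1:ℝ) * (((N:ℝ)+1) * L ((N:ℝ)+1)^(N+1))
                = ((N:ℝ)+1) * L ((N:ℝ)+1)^(N+1) := one_mul _
              _ ≤ C * (1+δ)^N * (L ((kl.1:ℝ)+1)^(kl.1+1) * L ((kl.2:ℝ)+1)^(kl.2+1)) := h
          have hterm : (r^kl.1 / L ((kl.1:ℝ)+1)^(kl.1+1)) * (r^kl.2 / L ((kl.2:ℝ)+1)^(kl.2+1))
              = r^N * (1 / (L ((kl.1:ℝ)+1)^(kl.1+1) * L ((kl.2:ℝ)+1)^(kl.2+1))) := by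
            rw [← hsum, pow_add]; ring
          rw [hterm]
          calc r^N * (1 / (L ((kl.1:ℝ)+1)^(kl.1+1) * L ((kl.2:ℝ)+1)^(kl.2+1)))
              ≤ r^N * (C * (1+δ)^N / (((N:ℝ)+1) * L ((N:ℝ)+1)^(N+1))) :=
                mul_le_mul_of_nonneg_left hdiv (pow_nonneg hr.le N)
            _ = C * (1+δ)^N * r^N / (((N:ℝ)+1) * L ((N:ℝ)+1)^(N+1)) := by ring
      _ = (Finset.HasAntidiagonal.antidiagonal N).card •
            (C * (1+δ)^N * r^N / (((N:ℝ)+1) * L ((N:ℝ)+1)^(N+1))) := Finset.sum_const _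
      _ = ((N:ℝ)+1) * (C * (1+δ)^N * r^N / (((N:ℝ)+1) * L ((N:ℝ)+1)^(N+1))) := by
            rw [Finset.Nat.card_antidiagonal, nsmul_eq_mul]
            push_cast
            ring
      _ = C * (((1+δ)*r)^N / L ((N:ℝ)+1)^(N+1)) := by
            rw [mul_pow]
            field_simp
  rw [hE r, hE ((1+δ)*r), sq, hcauchy]
  calc (∑' N : ℕ, ∑ kl ∈ Finset.HasAntidiagonal.antidiagonal N,
        (r^kl.1 / L ((kl.1:ℝ)+1)^(kl.1+1)) * (r^kl.2 / L ((kl.2:ℝ)+1)^(kl.2+1)))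
      ≤ ∑' N : ℕ, C * (((1+δ)*r)^N / L ((N:ℝ)+1)^(N+1)) := by
        apply Summable.tsum_le_tsum hbound
        · exact summable_sum_mul_antidiagonal_of_summable_norm'
            (f := fun n : ℕ => r^n / L ((n:ℝ)+1)^(n+1))
            (g := fun n : ℕ => r^n / L ((n:ℝ)+1)^(n+1)) hfn hf hfn hf
        · exact hg.mul_left C
    _ = C * ∑' N : ℕ, ((1+δ)*r)^N / L ((N:ℝ)+1)^(N+1) := tsum_mul_left
end

section
/- Fix a < 0 < b and a < c₋ < 0 < c₊ < b. There exists a constant C = C(a,b,c₋,c₊) such that for every 0 < η < 1, the rectangle [c₋, c₊] × [−η, η] ⊆ ℂ is contained in the ellipse with foci a and b whose sum of semi-axes is (1 + Cη)(b−a)/2. -/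
private lemma aux_sq_lt_one {x : ℝ} (h1 : -1 < x) (h2 : x < 1) : x ^ 2 < 1 := by nlinarith

private lemma aux_sq_le_neg {x m : ℝ} (h1 : m ≤ x) (h2 : x ≤ 0) : x ^ 2 ≤ m ^ 2 := by nlinarith

private lemma aux_sq_le_pos {x p : ℝ} (h1 : 0 ≤ x) (h2 : x ≤ p) : x ^ 2 ≤ p ^ 2 := by nlinarith

private lemma aux_inv_ge {A B : ℝ} (hB : 0 ≤ B) (h : A * B = 1) (hA : A ≤ 1) : 1 ≤ B := by
  nlinarith

private lemma auxA {x y L : ℝ} (hx : x ^ 2 ≤ 1) (hy : y ^ 2 ≤ L ^ 2) :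
    2 * y ^ 2 * (1 + x ^ 2) + y ^ 4 ≤ y ^ 2 * (4 + L ^ 2) := by
  nlinarith [sq_nonneg y, mul_le_mul_of_nonneg_left hy (sq_nonneg y),
    mul_le_mul_of_nonneg_left hx (sq_nonneg y)]

private lemma auxE {x y c δ : ℝ} (hδ : 0 < δ) (hd : δ ≤ 1 - x ^ 2) (hc0 : 0 ≤ c)
    (hA : 2 * y ^ 2 * (1 + x ^ 2) + y ^ 4 ≤ 2 * δ * c) :
    (x ^ 2 - y ^ 2 - 1) ^ 2 + (2 * x * y) ^ 2 ≤ ((1 - x ^ 2) + c) ^ 2 := by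
  nlinarith [sq_nonneg c, mul_le_mul_of_nonneg_right hd hc0]

private lemma auxb1 {K T η : ℝ} (hK0 : 0 ≤ K) (hKle : K ≤ 1 + T * η ^ 2) (hT0 : 0 < T)
    (hη0 : 0 < η) (hη1 : η < 1) : K ^ 2 - 1 ≤ (η * (T + 1)) ^ 2 := by
  have h2 : η ^ 2 ≤ 1 := by nlinarith
  have hh1 : K ^ 2 ≤ (1 + T * η ^ 2) ^ 2 := by nlinarith
  have h3 : T ^ 2 * η ^ 2 * η ^ 2 ≤ T ^ 2 * η ^ 2 * 1 :=
    mul_le_mul_of_nonneg_left h2 (by positivity)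
  nlinarith [hh1, h3]

private lemma auxfin {T η : ℝ} (hT0 : 0 < T) (hη0 : 0 < η) (hη1 : η < 1) :
    1 + T * η ^ 2 + η * (T + 1) ≤ 1 + (2 * T + 1) * η := by
  nlinarith [mul_le_mul_of_nonneg_left (by nlinarith : η ^ 2 ≤ η) hT0.le]

private lemma jouk_helper (u s : ℂ) (hs : s ^ 2 = u ^ 2 - 1) :
    (u + s) + (u + s)⁻¹ = 2 * u ∧
      (‖u + s‖) ^ 2 ≤ (‖u‖) ^ 2 + ‖u ^ 2 - 1‖ +
        Real.sqrt (((‖u‖) ^ 2 + ‖u ^ 2 - 1‖) ^ 2 - 1) := by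
  have hprod : (u + s) * (u - s) = 1 := by linear_combination -hs
  have hinv : (u + s)⁻¹ = u - s := inv_eq_of_mul_eq_one_right hprod
  constructor
  · rw [hinv]; ring
  · set K := (‖u‖) ^ 2 + ‖u ^ 2 - 1‖ with hK
    have hs2 : (‖s‖) ^ 2 = ‖u ^ 2 - 1‖ := by
      rw [← norm_pow, hs]
    have hpar : (‖u + s‖) ^ 2 + (‖u - s‖) ^ 2 = 2 * K := by
      rw [hK, ← hs2]
      simp only [Complex.sq_norm, Complex.normSq_apply, Complex.add_re, Complex.add_im,
        Complex.sub_re, Complex.sub_im]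
      ring
    have hmul : (‖u + s‖) ^ 2 * (‖u - s‖) ^ 2 = 1 := by
      rw [← mul_pow, ← norm_mul, hprod, norm_one, one_pow]
    set m := (‖u + s‖) ^ 2 with hm
    have hsq : (m - K) ^ 2 = K ^ 2 - 1 := by linear_combination m * hpar - hmul
    have hle : m - K ≤ Real.sqrt (K ^ 2 - 1) := by
      rw [← hsq, Real.sqrt_sq_eq_abs]; exact le_abs_self _
    linarith

set_option maxHeartbeats 1000000 in
theorem stmt9 (a b cm cp : ℝ) (h1 : a < cm) (h2 : cm < 0) (h3 : 0 < cp) (h4 : cp < b) :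
    ∃ C > (0:ℝ), ∀ η : ℝ, 0 < η → η < 1 → ∀ z : ℂ,
      z.re ∈ Set.Icc cm cp → z.im ∈ Set.Icc (-η) η →
      ∃ w : ℂ, 1 ≤ ‖w‖ ∧ ‖w‖ ≤ 1 + C * η ∧
        z = ((a : ℂ) + b) / 2 + ((b : ℂ) - a) / 4 * (w + w⁻¹) := by
  have hba : (0:ℝ) < b - a := by linarith
  set L : ℝ := 2 / (b - a) with hLdef
  have hLpos : 0 < L := by positivity
  set xm : ℝ := (2 * cm - (a + b)) / (b - a) with hxmdef
  set xp : ℝ := (2 * cp - (a + b)) / (b - a) with hxpdef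
  have hxm1 : -1 < xm := by
    rw [hxmdef, lt_div_iff₀ hba]; linarith
  have hxm1' : xm < 1 := by
    rw [hxmdef, div_lt_iff₀ hba]; linarith
  have hxp1 : xp < 1 := by
    rw [hxpdef, div_lt_iff₀ hba]; linarith
  have hxp1' : -1 < xp := by
    rw [hxpdef, lt_div_iff₀ hba]; linarith
  set q : ℝ := max (xm ^ 2) (xp ^ 2) with hqdef
  have hq1 : q < 1 := by
    rw [hqdef]
    exact max_lt (aux_sq_lt_one hxm1 hxm1') (aux_sq_lt_one hxp1' hxp1)
  have hq0 : 0 ≤ q := le_trans (sq_nonneg xm) (le_max_left _ _)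
  set δ : ℝ := 1 - q with hδdef
  have hδ : 0 < δ := by simp only [hδdef]; linarith
  set M : ℝ := 1 + (4 + L ^ 2) / (2 * δ) with hMdef
  have hM1 : 1 ≤ M := by
    rw [hMdef]
    have : 0 ≤ (4 + L ^ 2) / (2 * δ) := by positivity
    linarith
  set T : ℝ := L ^ 2 * M with hTdef
  have hT0 : 0 < T := by positivity
  refine ⟨2 * T + 1, by positivity, ?_⟩
  intro η hη0 hη1 z hre him
  obtain ⟨hre1, hre2⟩ := hre
  obtain ⟨him1, him2⟩ := him
  set x : ℝ := (2 * z.re - (a + b)) / (b - a) with hxdef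
  set y : ℝ := 2 * z.im / (b - a) with hydef
  set u : ℂ := (x : ℂ) + (y : ℂ) * Complex.I with hudef
  -- choose square root with the right sign
  obtain ⟨s₀, hs₀⟩ := IsAlgClosed.exists_pow_nat_eq (u ^ 2 - 1) (n := 2) zero_lt_two
  have hex : ∃ t : ℂ, t ^ 2 = u ^ 2 - 1 ∧ 1 ≤ ‖u + t‖ := by
    rcases le_total 1 (‖u + s₀‖) with h | h
    · exact ⟨s₀, hs₀, h⟩
    · refine ⟨-s₀, by rw [neg_sq]; exact hs₀, ?_⟩
      have hprod : (u + s₀) * (u + -s₀) = 1 := by linear_combination -hs₀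
      have habs : ‖u + s₀‖ * ‖u + -s₀‖ = 1 := by
        rw [← norm_mul, hprod, norm_one]
      exact aux_inv_ge (norm_nonneg _) habs h
  obtain ⟨t, ht, ht1⟩ := hex
  obtain ⟨heq, hlem⟩ := jouk_helper u t ht
  set w : ℂ := u + t with hwdef
  set K : ℝ := (‖u‖) ^ 2 + ‖u ^ 2 - 1‖ with hKdef
  -- basic coordinates
  have hure : u.re = x := by simp [hudef]
  have huim : u.im = y := by simp [hudef]
  -- bounds on x and y
  have hxl : xm ≤ x := by
    rw [hxmdef, hxdef]; exact (div_le_div_iff_of_pos_right hba).mpr (by linarith)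
  have hxu : x ≤ xp := by
    rw [hxpdef, hxdef]; exact (div_le_div_iff_of_pos_right hba).mpr (by linarith)
  have hxq : x ^ 2 ≤ q := by
    rcases le_total 0 x with h | h
    · exact le_trans (aux_sq_le_pos h hxu) (le_max_right _ _)
    · exact le_trans (aux_sq_le_neg hxl h) (le_max_left _ _)
  have hx1 : x ^ 2 < 1 := lt_of_le_of_lt hxq hq1
  have hd : δ ≤ 1 - x ^ 2 := by rw [hδdef]; linarith
  have hzim2 : z.im ^ 2 ≤ η ^ 2 := sq_le_sq' him1 him2
  have hyL : y ^ 2 ≤ L ^ 2 * η ^ 2 := by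
    have hy : y = L * z.im := by rw [hydef, hLdef]; ring
    rw [hy, mul_pow]
    exact mul_le_mul_of_nonneg_left hzim2 (sq_nonneg L)
  have hη2le : η ^ 2 ≤ 1 := aux_sq_le_pos hη0.le hη1.le |>.trans (by norm_num)
  have hy1 : y ^ 2 ≤ L ^ 2 := by
    calc y ^ 2 ≤ L ^ 2 * η ^ 2 := hyL
      _ ≤ L ^ 2 * 1 := mul_le_mul_of_nonneg_left hη2le (sq_nonneg L)
      _ = L ^ 2 := mul_one _
  -- bound on |u^2-1|
  have habs2 : ‖u ^ 2 - 1‖ =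
      Real.sqrt ((x ^ 2 - y ^ 2 - 1) ^ 2 + (2 * x * y) ^ 2) := by
    have hval : u ^ 2 - 1 = ((x ^ 2 - y ^ 2 - 1 : ℝ) : ℂ) + ((2 * x * y : ℝ) : ℂ) * Complex.I := by
      rw [hudef]; push_cast
      have hI : Complex.I ^ 2 = -1 := Complex.I_sq
      linear_combination (y:ℂ)^2 * hI
    rw [hval, Complex.norm_add_mul_I]
  set c : ℝ := y ^ 2 * (4 + L ^ 2) / (2 * δ) with hcdef
  have hc0 : 0 ≤ c := by positivity
  have hA : 2 * y ^ 2 * (1 + x ^ 2) + y ^ 4 ≤ 2 * δ * c := by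
    have h2 : 2 * δ * c = y ^ 2 * (4 + L ^ 2) := by
      rw [hcdef]; field_simp
    rw [h2]
    exact auxA hx1.le hy1
  have habsle : ‖u ^ 2 - 1‖ ≤ (1 - x ^ 2) + c := by
    rw [habs2]
    calc Real.sqrt ((x ^ 2 - y ^ 2 - 1) ^ 2 + (2 * x * y) ^ 2)
        ≤ Real.sqrt (((1 - x ^ 2) + c) ^ 2) := Real.sqrt_le_sqrt (auxE hδ hd hc0 hA)
      _ = (1 - x ^ 2) + c := Real.sqrt_sq (by linarith)
  have habsu : (‖u‖) ^ 2 = x ^ 2 + y ^ 2 := by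
    rw [Complex.sq_norm, Complex.normSq_apply, hure, huim]; ring
  have hKle : K ≤ 1 + y ^ 2 * M := by
    have hyM : y ^ 2 * M = y ^ 2 + c := by rw [hMdef, hcdef]; field_simp
    rw [hKdef, habsu, hyM]; linarith
  have hK0 : 0 ≤ K := by rw [hKdef]; positivity
  have hεT : y ^ 2 * M ≤ T * η ^ 2 := by
    rw [hTdef]
    calc y ^ 2 * M ≤ (L ^ 2 * η ^ 2) * M :=
          mul_le_mul_of_nonneg_right hyL (by linarith)
      _ = L ^ 2 * M * η ^ 2 := by ring
  have hKle' : K ≤ 1 + T * η ^ 2 := by linarith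
  -- bound sqrt(K^2-1)
  have hsqrt : Real.sqrt (K ^ 2 - 1) ≤ η * (T + 1) := by
    calc Real.sqrt (K ^ 2 - 1) ≤ Real.sqrt ((η * (T + 1)) ^ 2) :=
          Real.sqrt_le_sqrt (auxb1 hK0 hKle' hT0 hη0 hη1)
      _ = η * (T + 1) := Real.sqrt_sq (by positivity)
  -- the modulus bound
  have hwabs : ‖w‖ ≤ 1 + (2 * T + 1) * η := by
    have hm : (‖w‖) ^ 2 ≤ 1 + (2 * T + 1) * η := by
      calc (‖w‖) ^ 2 ≤ K + Real.sqrt (K ^ 2 - 1) := hlem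
        _ ≤ 1 + T * η ^ 2 + η * (T + 1) := by linarith
        _ ≤ 1 + (2 * T + 1) * η := auxfin hT0 hη0 hη1
    have h0 : ‖w‖ ≤ (‖w‖) ^ 2 := by
      have := mul_le_mul_of_nonneg_left ht1 (norm_nonneg w)
      rw [mul_one] at this
      rw [pow_two]; exact this
    linarith
  refine ⟨w, ht1, hwabs, ?_⟩
  -- the equation
  rw [heq]
  have hz : z = (z.re : ℂ) + (z.im : ℂ) * Complex.I := (Complex.re_add_im z).symm
  have hbane : (b - a : ℝ) ≠ 0 := ne_of_gt hba
  have hba' : ((b : ℂ) - a) ≠ 0 := by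
    rw [show ((b:ℂ) - a) = ((b - a : ℝ) : ℂ) by push_cast; ring]
    exact Complex.ofReal_ne_zero.mpr hbane
  rw [hudef, hxdef, hydef]
  push_cast
  field_simp
  linear_combination 8 * hz
end

section
/- Let L : [0,∞) → [1,∞) be slowly varying, eventually increasing, unbounded, with ρ ↦ ρ log(ρL(ρ)) eventually a convex function of log ρ, and with ε(ρ) = ρL'(ρ)/L(ρ) bounded and satisfying ε(ρ) + ρε'(ρ) → 0. Define Λ_L(r) = sup_{x>0}[x log r − x log(x L(x))]. Then for each fixed δ > 0, log sup_{n∈ℕ, n ≤ r} [r^n/(n! L(n+1)^{n+1} δ^n)] ≍ δ^{-1} Λ_L(r) as r → ∞, with implicit constants independent of δ. -/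
open Filter Real

lemma aux_pow_le (n : ℕ) : (n:ℝ)^n ≤ Real.exp n * n.factorial := by
  induction n with
  | zero => norm_num
  | succ n ih =>
    rcases Nat.eq_zero_or_pos n with h0 | hpos
    · subst h0
      norm_num
    have hn : (0:ℝ) < n := by exact_mod_cast hpos
    have h1 : ((n:ℝ)+1)^n ≤ Real.exp 1 * (n:ℝ)^n := by
      have hthis := Real.add_one_le_exp (1/(n:ℝ))
      have h2 : ((n:ℝ)+1) ≤ (n:ℝ) * Real.exp (1/n) := by
        have he : ((n:ℝ)+1) = (n:ℝ) * (1/(n:ℝ) + 1) := by field_simp; ring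
        rw [he]
        nlinarith [hthis]
      calc ((n:ℝ)+1)^n ≤ ((n:ℝ) * Real.exp (1/n))^n :=
            pow_le_pow_left₀ (by positivity) h2 n
        _ = (n:ℝ)^n * (Real.exp (1/n))^n := mul_pow _ _ _
        _ = (n:ℝ)^n * Real.exp 1 := by
            rw [← Real.exp_nat_mul]
            congr 1
            field_simp
        _ = Real.exp 1 * (n:ℝ)^n := by ring
    have hfact : ((n+1:ℕ).factorial : ℝ) = ((n:ℝ)+1) * n.factorial := by
      push_cast [Nat.factorial_succ]; ring
    have hexp : Real.exp ((n+1:ℕ):ℝ) = Real.exp 1 * Real.exp n := by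
      push_cast
      rw [← Real.exp_add]
      ring_nf
    have hcast : ((n+1:ℕ):ℝ)^(n+1) = ((n:ℝ)+1)^(n+1) := by push_cast; ring
    rw [hcast, hexp, hfact]
    calc ((n:ℝ)+1)^(n+1) = ((n:ℝ)+1)^n * ((n:ℝ)+1) := by ring
      _ ≤ (Real.exp 1 * (n:ℝ)^n) * ((n:ℝ)+1) :=
          mul_le_mul_of_nonneg_right h1 (by positivity)
      _ ≤ (Real.exp 1 * (Real.exp n * n.factorial)) * ((n:ℝ)+1) := by
          refine mul_le_mul_of_nonneg_right ?_ (by positivity)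
          exact mul_le_mul_of_nonneg_left ih (Real.exp_pos 1).le
      _ = Real.exp 1 * Real.exp n * (((n:ℝ)+1) * n.factorial) := by ring

lemma aux_slow_s12 (L ε : ℝ → ℝ) (hL1 : ∀ x ≥ (0:ℝ), 1 ≤ L x)
    (hdiff : Differentiable ℝ L) (hε : ∀ ρ, ε ρ = ρ * deriv L ρ / L ρ)
    (hslow : Tendsto ε atTop (nhds 0)) :
    ∀ η > (0:ℝ), ∃ T : ℝ, 1 ≤ T ∧ ∀ x y : ℝ, T ≤ x → x ≤ y →
      |Real.log (L y) - Real.log (L x)| ≤ η * (Real.log y - Real.log x) := by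
  intro η hη
  have hLpos : ∀ x, 0 ≤ x → 0 < L x := fun x hx => lt_of_lt_of_le one_pos (hL1 x hx)
  obtain ⟨T₀, hT₀⟩ := eventually_atTop.mp
    ((NormedAddCommGroup.tendsto_nhds_zero.mp hslow) η hη)
  refine ⟨max T₀ 1, le_max_right _ _, fun x y hTx hxy => ?_⟩
  have hx1 : (1:ℝ) ≤ x := le_trans (le_max_right _ _) hTx
  have hx0 : (0:ℝ) < x := lt_of_lt_of_le one_pos hx1
  have hy0 : (0:ℝ) < y := lt_of_lt_of_le hx0 hxy
  set G : ℝ → ℝ := fun u => Real.log (L (Real.exp u)) with hG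
  have hGd : ∀ u : ℝ, HasDerivAt G (ε (Real.exp u)) u := by
    intro u
    have h1 : HasDerivAt Real.exp (Real.exp u) u := Real.hasDerivAt_exp u
    have h2 : HasDerivAt L (deriv L (Real.exp u)) (Real.exp u) := (hdiff _).hasDerivAt
    have h3 : HasDerivAt (fun u => L (Real.exp u)) (deriv L (Real.exp u) * Real.exp u) u :=
      h2.comp u h1
    have hLne : L (Real.exp u) ≠ 0 := (hLpos _ (Real.exp_pos u).le).ne'
    have h4 := (Real.hasDerivAt_log hLne).comp u h3
    have h5 : ε (Real.exp u) = (L (Real.exp u))⁻¹ * (deriv L (Real.exp u) * Real.exp u) := by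
      rw [hε (Real.exp u), div_eq_mul_inv]; ring
    rw [h5]
    exact h4
  have key : ‖G (Real.log y) - G (Real.log x)‖ ≤ η * ‖Real.log y - Real.log x‖ := by
    have hsub : Set.Icc (Real.log x) (Real.log y) ⊆ Set.univ := Set.subset_univ _
    refine Convex.norm_image_sub_le_of_norm_deriv_le (C := η)
      (f := G) (s := Set.Icc (Real.log x) (Real.log y))
      (fun u _ => (hGd u).differentiableAt) ?_ (convex_Icc _ _)
      (Set.left_mem_Icc.mpr (Real.log_le_log hx0 hxy))
      (Set.right_mem_Icc.mpr (Real.log_le_log hx0 hxy))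
    intro u hu
    rw [(hGd u).deriv]
    have hux : x ≤ Real.exp u := by
      calc x = Real.exp (Real.log x) := (Real.exp_log hx0).symm
        _ ≤ Real.exp u := Real.exp_le_exp.mpr hu.1
    exact (hT₀ (Real.exp u) (le_trans (le_trans (le_max_left _ _) hTx) hux)).le
  have hgx : G (Real.log x) = Real.log (L x) := by rw [hG]; simp [Real.exp_log hx0]
  have hgy : G (Real.log y) = Real.log (L y) := by rw [hG]; simp [Real.exp_log hy0]
  rw [hgx, hgy] at key
  have habs : ‖Real.log y - Real.log x‖ = Real.log y - Real.log x := by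
    rw [Real.norm_eq_abs, abs_of_nonneg (sub_nonneg.mpr (Real.log_le_log hx0 hxy))]
  rw [Real.norm_eq_abs] at key
  rw [habs] at key
  exact key

section
variable (L Λ : ℝ → ℝ)

lemma aux_bound (hL1 : ∀ x ≥ (0:ℝ), 1 ≤ L x) {r : ℝ} (hr : 1 ≤ r) :
    ∀ y ∈ {y | ∃ x > (0:ℝ), y = x * Real.log r - x * Real.log (x * L x)}, y ≤ r := by
  rintro y ⟨x, hx, rfl⟩
  have hLx : 1 ≤ L x := hL1 x hx.le
  have h1 : Real.log x ≤ Real.log (x * L x) :=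
    Real.log_le_log hx (le_mul_of_one_le_right hx.le hLx)
  have h2 : x * Real.log r - x * Real.log (x * L x) ≤ x * (Real.log r - Real.log x) := by
    nlinarith
  have h3 : Real.log r - Real.log x = Real.log (r / x) :=
    (Real.log_div (by linarith : r ≠ 0) hx.ne').symm
  have h4 : Real.log (r / x) ≤ r / x - 1 := Real.log_le_sub_one_of_pos (by positivity)
  have h5 : x * (r / x - 1) = r - x := by field_simp
  nlinarith [h2, h4]

lemma aux_lam_ge (hL1 : ∀ x ≥ (0:ℝ), 1 ≤ L x)
    (hΛ : ∀ r, Λ r = sSup {y | ∃ x > (0:ℝ), y = x * Real.log r - x * Real.log (x * L x)})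
    {r x : ℝ} (hr : 1 ≤ r) (hx : 0 < x) :
    x * Real.log r - x * Real.log (x * L x) ≤ Λ r := by
  rw [hΛ]
  exact le_csSup ⟨r, fun y hy => aux_bound L hL1 hr y hy⟩ ⟨x, hx, rfl⟩

lemma aux_lam_ub (hL1 : ∀ x ≥ (0:ℝ), 1 ≤ L x)
    (hΛ : ∀ r, Λ r = sSup {y | ∃ x > (0:ℝ), y = x * Real.log r - x * Real.log (x * L x)})
    {r : ℝ} (hr : 1 ≤ r) : Λ r ≤ r := by
  rw [hΛ]
  exact Real.sSup_le (aux_bound L hL1 hr) (by linarith)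

end

lemma aux_sqrtlog (K : ℝ) : ∀ᶠ s in atTop, K * (Real.log s + 1) ≤ Real.sqrt s := by
  have h0 : Tendsto (fun x : ℝ => Real.log x / x ^ ((1:ℝ)/2)) atTop (nhds 0) :=
    (isLittleO_log_rpow_atTop (by norm_num : (0:ℝ) < 1/2)).tendsto_div_nhds_zero
  have hK : (0:ℝ) < |K| + 1 := by positivity
  have h1 : ∀ᶠ x : ℝ in atTop, Real.log x / x ^ ((1:ℝ)/2) < 1 / (2 * (|K| + 1)) :=
    (h0.eventually (gt_mem_nhds (by positivity))
      : ∀ᶠ x in atTop, Real.log x / x ^ ((1:ℝ)/2) < 1 / (2 * (|K|+1)))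
  filter_upwards [h1, eventually_ge_atTop (1:ℝ),
    eventually_ge_atTop ((4 * (|K| + 1))^2)] with x hx hx1 hxq
  have hx4 : 4 * (|K| + 1) ≤ Real.sqrt x := by
    have := Real.sqrt_le_sqrt hxq
    rwa [Real.sqrt_sq (by positivity)] at this
  have hx0 : (0:ℝ) < x := lt_of_lt_of_le one_pos hx1
  have hrw : x ^ ((1:ℝ)/2) = Real.sqrt x := (Real.sqrt_eq_rpow x).symm
  rw [hrw] at hx
  have hs0 : (0:ℝ) < Real.sqrt x := Real.sqrt_pos.mpr hx0
  have hlog : Real.log x ≤ Real.sqrt x / (2 * (|K| + 1)) := by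
    rw [div_lt_iff₀ hs0, one_div] at hx
    rw [div_eq_inv_mul]
    linarith [hx]
  have hKK : K ≤ |K| + 1 := by cases abs_cases K with
    | inl h => linarith [h.1]
    | inr h => linarith [h.1, abs_nonneg K]
  have hlog0 : 0 ≤ Real.log x := Real.log_nonneg hx1
  calc K * (Real.log x + 1) ≤ (|K| + 1) * (Real.log x + 1) := by nlinarith
    _ = (|K| + 1) * Real.log x + (|K| + 1) := by ring
    _ ≤ (|K| + 1) * (Real.sqrt x / (2 * (|K| + 1))) + (|K| + 1) := by nlinarith
    _ = Real.sqrt x / 2 + (|K| + 1) := by field_simp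
    _ ≤ Real.sqrt x / 2 + Real.sqrt x / 4 := by linarith
    _ ≤ Real.sqrt x := by linarith [hs0.le]

set_option maxHeartbeats 4000000 in
theorem stmt12 (L Λ ε : ℝ → ℝ)
    (hL1 : ∀ x ≥ (0:ℝ), 1 ≤ L x)
    (hmono : ∃ x₀, MonotoneOn L (Set.Ici x₀))
    (htend : Tendsto L atTop atTop)
    (hdiff : Differentiable ℝ L)
    (hε : ∀ ρ, ε ρ = ρ * deriv L ρ / L ρ)
    (hslow : Tendsto ε atTop (nhds 0))
    (hconv : ∃ t₀ : ℝ, ConvexOn ℝ (Set.Ici t₀)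
      (fun t => Real.exp t * Real.log (Real.exp t * L (Real.exp t))))
    (hεbdd : ∃ M : ℝ, ∀ ρ ≥ (0:ℝ), |ε ρ| ≤ M)
    (hε' : Tendsto (fun ρ => ε ρ + ρ * deriv ε ρ) atTop (nhds 0))
    (hΛ : ∀ r, Λ r = sSup {y | ∃ x > (0:ℝ), y = x * Real.log r - x * Real.log (x * L x)}) :
    ∃ c C : ℝ, 0 < c ∧ 0 < C ∧ ∀ δ > (0:ℝ), ∃ r₀ : ℝ, ∀ r ≥ r₀,
      c * (δ⁻¹ * Λ r) ≤
        Real.log (sSup {y | ∃ n : ℕ, (n : ℝ) ≤ r ∧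
          y = r ^ n / ((n.factorial : ℝ) * L (n + 1) ^ (n + 1) * δ ^ n)}) ∧
      Real.log (sSup {y | ∃ n : ℕ, (n : ℝ) ≤ r ∧
          y = r ^ n / ((n.factorial : ℝ) * L (n + 1) ^ (n + 1) * δ ^ n)}) ≤
        C * (δ⁻¹ * Λ r) := by
  classical
  obtain ⟨x₀', hx₀'⟩ := hmono
  set x₀ : ℝ := max x₀' 1 with hx₀def
  have hx₀1 : (1:ℝ) ≤ x₀ := le_max_right _ _
  have hx₀mono : MonotoneOn L (Set.Ici x₀) :=
    hx₀'.mono (Set.Ici_subset_Ici.mpr (le_max_left _ _))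
  have hLpos : ∀ x, 0 ≤ x → 0 < L x := fun x hx => lt_of_lt_of_le one_pos (hL1 x hx)
  have slow := aux_slow_s12 L ε hL1 hdiff hε hslow
  obtain ⟨T₁, hT₁ge, hT₁⟩ := slow 1 one_pos
  obtain ⟨T₄, hT₄ge, hT₄⟩ := slow (1/4) (by norm_num)
  -- eventual lower bound on Λ
  have ev_sqrt : ∀ᶠ s in atTop, Real.sqrt s ≤ Λ s := by
    have hlog := Real.tendsto_log_atTop.eventually_ge_atTop ((8/3)*(Real.log (L T₄) + 1))
    filter_upwards [eventually_ge_atTop (1:ℝ), eventually_ge_atTop (T₄^2), hlog]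
      with s hs1 hsT hsl
    have hs0 : (0:ℝ) < s := lt_of_lt_of_le one_pos hs1
    have hsq0 : 0 < Real.sqrt s := Real.sqrt_pos.mpr hs0
    have hsqT : T₄ ≤ Real.sqrt s := by
      have h := Real.sqrt_le_sqrt hsT
      rwa [Real.sqrt_sq (by linarith : (0:ℝ) ≤ T₄)] at h
    have hLT := hT₄ T₄ (Real.sqrt s) (le_refl _) hsqT
    have hlsq : Real.log (Real.sqrt s) = Real.log s / 2 := Real.log_sqrt hs0.le
    have hT₄0 : 0 ≤ Real.log T₄ := Real.log_nonneg hT₄ge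
    have hbr : 1 ≤ Real.log s - Real.log (Real.sqrt s) - Real.log (L (Real.sqrt s)) := by
      have h2 := (abs_le.mp hLT).2
      rw [hlsq] at h2 ⊢
      nlinarith [h2, hT₄0, hsl]
    have hmem := aux_lam_ge L Λ hL1 hΛ hs1 hsq0
    have hexpand : Real.log (Real.sqrt s * L (Real.sqrt s))
        = Real.log (Real.sqrt s) + Real.log (L (Real.sqrt s)) :=
      Real.log_mul hsq0.ne' (hLpos _ hsq0.le).ne'
    rw [hexpand] at hmem
    nlinarith [hmem, mul_le_mul_of_nonneg_left hbr hsq0.le]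
  -- Λ grows faster than any multiple of log
  have evW : ∀ W : ℝ, ∀ᶠ s in atTop, W * Real.log s + W ≤ Λ s - 1 ∧ 1 ≤ Real.log s := by
    intro W
    filter_upwards [ev_sqrt, aux_sqrtlog (|W| + 2), Real.tendsto_log_atTop.eventually_ge_atTop 1]
      with s hsq hK hl1
    refine ⟨?_, hl1⟩
    have hW : W ≤ |W| := le_abs_self W
    have hW0 : 0 ≤ |W| := abs_nonneg W
    nlinarith [hsq, hK, hl1, hW, hW0]
  -- near-maximizer facts
  have h16 : Real.sqrt 16 = 4 := by
    rw [show (16:ℝ) = 4^2 by norm_num, Real.sqrt_sq (by norm_num : (0:ℝ) ≤ 4)]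
  have he1 : (1:ℝ) ≤ Real.exp 1 := by nlinarith [Real.add_one_le_exp (1:ℝ)]
  have he275 : Real.exp 1 ≤ 2.75 := by nlinarith [Real.exp_one_lt_d9]
  have nearmax : ∀ᶠ s in atTop, ∀ x : ℝ, 0 < x →
      Λ s - 1 ≤ x * Real.log s - x * Real.log (x * L x) →
      1 ≤ x ∧ (Λ s - 1) / Real.log s ≤ x ∧ x ≤ 2 * Λ s := by
    filter_upwards [ev_sqrt, evW (Real.exp 1 * (x₀ + 1)), evW 2,
      eventually_ge_atTop (16:ℝ), eventually_ge_atTop (1:ℝ)]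
      with s hsq hWE' hW2' hs16 hs1
    obtain ⟨hWE, hl1⟩ := hWE'
    obtain ⟨hW2, -⟩ := hW2'
    intro x hx hfx
    have hs0 : (0:ℝ) < s := by linarith
    have hlogs : (1:ℝ) ≤ Real.log s := hl1
    have hlogs0 : (0:ℝ) < Real.log s := by linarith
    have hΛ4 : (4:ℝ) ≤ Λ s := by
      have h := Real.sqrt_le_sqrt hs16
      rw [h16] at h
      linarith [hsq]
    have hΛlog : Real.log s + 2 ≤ Λ s - 1 := by nlinarith [hW2, hlogs]
    have hLx : (0:ℝ) < L x := hLpos x hx.le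
    have hexp : Real.log (x * L x) = Real.log x + Real.log (L x) :=
      Real.log_mul hx.ne' hLx.ne'
    rw [hexp] at hfx
    have hfx' : Λ s - 1 ≤ x * (Real.log s - Real.log x - Real.log (L x)) := by
      have h : x * (Real.log s - Real.log x - Real.log (L x))
          = x * Real.log s - x * (Real.log x + Real.log (L x)) := by ring
      rw [h]; exact hfx
    have hlogL0 : (0:ℝ) ≤ Real.log (L x) := Real.log_nonneg (hL1 x hx.le)
    have hx1 : (1:ℝ) ≤ x := by
      by_contra hcon
      push_neg at hcon
      have hinv : Real.log x⁻¹ ≤ x⁻¹ - 1 := Real.log_le_sub_one_of_pos (by positivity)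
      rw [Real.log_inv] at hinv
      have hnxlx : -(x * Real.log x) ≤ 1 - x := by
        have := mul_le_mul_of_nonneg_left hinv hx.le
        have hxx : x * x⁻¹ = 1 := mul_inv_cancel₀ hx.ne'
        nlinarith [this]
      nlinarith [hfx', hΛlog, hnxlx, mul_nonneg hx.le hlogL0,
        mul_le_mul_of_nonneg_right hcon.le hlogs0.le]
    have hlx0 : (0:ℝ) ≤ Real.log x := Real.log_nonneg hx1
    have hvle : Real.log s - Real.log x - Real.log (L x) ≤ Real.log s := by linarith
    have hv0 : 0 < Real.log s - Real.log x - Real.log (L x) := by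
      by_contra hcon
      push_neg at hcon
      nlinarith [hfx', hΛlog, mul_nonpos_of_nonneg_of_nonpos hx.le hcon]
    have h2 : (Λ s - 1) / Real.log s ≤ x := by
      rw [div_le_iff₀ hlogs0]
      nlinarith [hfx', mul_le_mul_of_nonneg_left hvle hx.le]
    refine ⟨hx1, h2, ?_⟩
    by_contra hcon
    push_neg at hcon
    have hxE : Real.exp 1 * (x₀ + 1) ≤ x := by
      have hE2 : Real.exp 1 * (x₀ + 1) ≤ (Λ s - 1) / Real.log s := by
        rw [le_div_iff₀ hlogs0]
        nlinarith [hWE, hlogs]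
      linarith [h2]
    have he0 : (0:ℝ) < Real.exp 1 := Real.exp_pos 1
    set xe : ℝ := x / Real.exp 1 with hxedef
    have hxe0 : 0 < xe := by positivity
    have hxex₀ : x₀ ≤ xe := by
      rw [hxedef, le_div_iff₀ he0]
      nlinarith [hxE, hx₀1]
    have hxe_le : xe ≤ x := by
      rw [hxedef, div_le_iff₀ he0]
      nlinarith [hx.le, he1]
    have hLxe : L xe ≤ L x :=
      hx₀mono (Set.mem_Ici.mpr hxex₀) (Set.mem_Ici.mpr (le_trans hxex₀ hxe_le)) hxe_le
    have hlogxe : Real.log xe = Real.log x - 1 := by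
      rw [hxedef, Real.log_div hx.ne' (Real.exp_ne_zero 1), Real.log_exp]
    have hfxe := aux_lam_ge L Λ hL1 hΛ hs1 hxe0
    have hexpe : Real.log (xe * L xe) = Real.log xe + Real.log (L xe) :=
      Real.log_mul hxe0.ne' (hLpos xe hxe0.le).ne'
    rw [hexpe] at hfxe
    have hLxe' : Real.log (L xe) ≤ Real.log (L x) :=
      Real.log_le_log (hLpos xe hxe0.le) hLxe
    have hbr : Real.log s - Real.log x - Real.log (L x) + 1
        ≤ Real.log s - Real.log xe - Real.log (L xe) := by
      rw [hlogxe]; linarith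
    have hlow : xe * (Real.log s - Real.log x - Real.log (L x) + 1) ≤ Λ s := by
      calc xe * (Real.log s - Real.log x - Real.log (L x) + 1)
          ≤ xe * (Real.log s - Real.log xe - Real.log (L xe)) :=
            mul_le_mul_of_nonneg_left hbr hxe0.le
        _ = xe * Real.log s - xe * (Real.log xe + Real.log (L xe)) := by ring
        _ ≤ Λ s := hfxe
    have heq : xe * (Real.log s - Real.log x - Real.log (L x) + 1)
        = (x * (Real.log s - Real.log x - Real.log (L x)) + x) / Real.exp 1 := by
      rw [hxedef]; ring
    rw [heq, div_le_iff₀ he0] at hlow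
    nlinarith [hlow, hfx', hcon, hΛ4,
      mul_le_mul_of_nonneg_left he275 (by linarith : (0:ℝ) ≤ Λ s)]
  -- scaling of Λ
  have scale : ∀ a : ℝ, 0 < a → ∀ᶠ s in atTop, a / 2 * Λ s ≤ Λ (a * s) := by
    intro a ha
    obtain ⟨Ta, hTa1, hTa⟩ := slow (1/(8*(|Real.log a|+1))) (by positivity)
    filter_upwards [nearmax, evW (max Ta (Ta/a) + 1), ev_sqrt, eventually_ge_atTop (16:ℝ),
      eventually_ge_atTop (1:ℝ), eventually_ge_atTop (1/a)] with s hnm hW' hsq hs16 hs1 hsa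
    obtain ⟨hWs, hl1⟩ := hW'
    have hs0 : (0:ℝ) < s := by linarith
    have hlogs0 : (0:ℝ) < Real.log s := by linarith
    have has1 : (1:ℝ) ≤ a * s := by
      rw [div_le_iff₀ ha] at hsa
      linarith [hsa]
    have hΛ4 : (4:ℝ) ≤ Λ s := by
      have h := Real.sqrt_le_sqrt hs16
      rw [h16] at h
      linarith [hsq]
    have hne : {y | ∃ x > (0:ℝ), y = x * Real.log s - x * Real.log (x * L x)}.Nonempty :=
      ⟨_, ⟨1, one_pos, rfl⟩⟩
    have hlt : Λ s - 1 < sSup {y | ∃ x > (0:ℝ), y = x * Real.log s - x * Real.log (x * L x)} := by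
      rw [← hΛ s]
      linarith
    obtain ⟨y, hy, hylt⟩ := exists_lt_of_lt_csSup hne hlt
    obtain ⟨x, hx, rfl⟩ := hy
    obtain ⟨hx1, hxdiv, hx2Λ⟩ := hnm x hx hylt.le
    have hLx : (0:ℝ) < L x := hLpos x hx.le
    have hfxv : Λ s - 1 ≤ x * (Real.log s - Real.log x - Real.log (L x)) := by
      have h : x * (Real.log s - Real.log x - Real.log (L x))
          = x * Real.log s - x * (Real.log x + Real.log (L x)) := by ring
      rw [h, ← Real.log_mul hx.ne' hLx.ne']
      exact hylt.le
    have hxW : max Ta (Ta/a) + 1 ≤ x := by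
      have h := hxdiv
      have h2 : max Ta (Ta/a) + 1 ≤ (Λ s - 1) / Real.log s := by
        rw [le_div_iff₀ hlogs0]
        nlinarith [hWs, hl1]
      linarith
    have hxTa : Ta ≤ x := by
      have := le_max_left Ta (Ta/a)
      linarith
    have haxTa : Ta ≤ a * x := by
      have h1 : Ta / a ≤ x := by
        have := le_max_right Ta (Ta/a)
        linarith
      rw [div_le_iff₀ ha] at h1
      linarith [h1]
    have hax0 : (0:ℝ) < a * x := by positivity
    have hΔ : |Real.log (L (a*x)) - Real.log (L x)| ≤ 1/8 := by
      have hden : (0:ℝ) < 8*(|Real.log a|+1) := by positivity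
      rcases le_total 1 a with ha1 | ha1
      · have hxax : x ≤ a * x := le_mul_of_one_le_left hx.le ha1
        have h := hTa x (a*x) hxTa hxax
        have hloga : Real.log (a*x) - Real.log x = Real.log a := by
          rw [Real.log_mul ha.ne' hx.ne']; ring
        rw [hloga] at h
        have hla : Real.log a ≤ |Real.log a| := le_abs_self _
        have habs : 0 ≤ |Real.log a| := abs_nonneg _
        calc |Real.log (L (a*x)) - Real.log (L x)| ≤ 1/(8*(|Real.log a|+1)) * Real.log a := h
          _ ≤ 1/8 := by
            rw [div_mul_eq_mul_div, one_mul, div_le_div_iff₀ hden (by norm_num : (0:ℝ) < 8)]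
            nlinarith [hla, habs]
      · have hxax : a * x ≤ x := by nlinarith [hx.le, ha1]
        have h := hTa (a*x) x haxTa hxax
        have hloga : Real.log x - Real.log (a*x) = -Real.log a := by
          rw [Real.log_mul ha.ne' hx.ne']; ring
        rw [hloga, abs_sub_comm] at h
        have hla : -Real.log a ≤ |Real.log a| := neg_le_abs _
        have habs : 0 ≤ |Real.log a| := abs_nonneg _
        calc |Real.log (L (a*x)) - Real.log (L x)| ≤ 1/(8*(|Real.log a|+1)) * -Real.log a := h
          _ ≤ 1/8 := by
            rw [div_mul_eq_mul_div, one_mul, div_le_div_iff₀ hden (by norm_num : (0:ℝ) < 8)]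
            nlinarith [hla, habs]
    have hge := aux_lam_ge L Λ hL1 hΛ has1 hax0
    have e1 : Real.log (a*s) = Real.log a + Real.log s := Real.log_mul ha.ne' hs0.ne'
    have e2 : Real.log ((a*x) * L (a*x))
        = Real.log a + Real.log x + Real.log (L (a*x)) := by
      rw [Real.log_mul hax0.ne' (hLpos _ hax0.le).ne', Real.log_mul ha.ne' hx.ne']
    rw [e1, e2] at hge
    have hd8 : x * (Real.log (L x) - Real.log (L (a*x))) ≥ -(x/8) := by
      have h := mul_le_mul_of_nonneg_left (abs_le.mp hΔ).2 hx.le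
      nlinarith [h]
    have hstep : a * (Λ s - 1 - x/8) ≤ Λ (a*s) := by
      have heq : a*x*(Real.log a + Real.log s)
          - a*x*(Real.log a + Real.log x + Real.log (L (a*x)))
          = a * (x * (Real.log s - Real.log x - Real.log (L x))
            + x * (Real.log (L x) - Real.log (L (a*x)))) := by ring
      rw [heq] at hge
      have hsum : Λ s - 1 - x/8 ≤ x * (Real.log s - Real.log x - Real.log (L x))
          + x * (Real.log (L x) - Real.log (L (a*x))) := by
        linarith [hfxv, hd8]
      calc a * (Λ s - 1 - x/8)
          ≤ a * (x * (Real.log s - Real.log x - Real.log (L x))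
            + x * (Real.log (L x) - Real.log (L (a*x)))) :=
            mul_le_mul_of_nonneg_left hsum ha.le
        _ ≤ Λ (a*s) := hge
    have hfin : Λ s / 2 ≤ Λ s - 1 - x/8 := by nlinarith [hx2Λ, hΛ4]
    calc a / 2 * Λ s = a * (Λ s / 2) := by ring
      _ ≤ a * (Λ s - 1 - x/8) := mul_le_mul_of_nonneg_left hfin ha.le
      _ ≤ Λ (a*s) := hstep
  have scale2 : ∀ a : ℝ, 0 < a → ∀ᶠ s in atTop, Λ (a * s) ≤ 2 * a * Λ s := by
    intro a ha
    have hmap : Tendsto (fun s : ℝ => a * s) atTop atTop :=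
      Tendsto.const_mul_atTop ha tendsto_id
    filter_upwards [hmap.eventually (scale a⁻¹ (by positivity))] with s hs
    have heq : a⁻¹ * (a * s) = s := by field_simp
    rw [heq] at hs
    have h2 := mul_le_mul_of_nonneg_left hs (by positivity : (0:ℝ) ≤ 2*a)
    calc Λ (a*s) = 2*a*(a⁻¹/2*Λ (a*s)) := by field_simp
      _ ≤ 2*a*Λ s := h2
  refine ⟨1/4, 6, by norm_num, by norm_num, ?_⟩
  intro δ hδ
  have hδi : (0:ℝ) < δ⁻¹ := by positivity
  obtain ⟨z, hz⟩ := eventually_atTop.mp (htend.eventually_ge_atTop δ⁻¹)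
  -- basic facts about the discrete supremum
  have hupos : ∀ (r : ℝ), 0 < r → ∀ n : ℕ,
      0 < r ^ n / ((n.factorial : ℝ) * L (↑n + 1) ^ (n + 1) * δ ^ n) := by
    intro r hr n
    have hLn : 0 < L (↑n + 1) := hLpos _ (by positivity)
    apply div_pos (pow_pos hr n)
    exact mul_pos (mul_pos (by exact_mod_cast n.factorial_pos) (pow_pos hLn _)) (pow_pos hδ n)
  have hDbdd : ∀ r : ℝ, 0 ≤ r → BddAbove {y | ∃ n : ℕ, (n : ℝ) ≤ r ∧
      y = r ^ n / ((n.factorial : ℝ) * L (↑n + 1) ^ (n + 1) * δ ^ n)} := by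
    intro r hr
    apply Set.Finite.bddAbove
    apply Set.Finite.subset ((Set.finite_Iic ⌊r⌋₊).image
      (fun n : ℕ => r ^ n / ((n.factorial : ℝ) * L (↑n + 1) ^ (n + 1) * δ ^ n)))
    rintro y ⟨n, hn, rfl⟩
    exact ⟨n, Nat.le_floor hn, rfl⟩
  have hDne : ∀ r : ℝ, 0 ≤ r → (1:ℝ) / ((1:ℝ) * L (0 + 1) ^ (0 + 1) * 1) ∈
      {y | ∃ n : ℕ, (n : ℝ) ≤ r ∧
        y = r ^ n / ((n.factorial : ℝ) * L (↑n + 1) ^ (n + 1) * δ ^ n)} := by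
    intro r hr
    refine ⟨0, by simpa using hr, ?_⟩
    norm_num
  have hsup_pos : ∀ r : ℝ, 0 < r → 0 < sSup {y | ∃ n : ℕ, (n : ℝ) ≤ r ∧
      y = r ^ n / ((n.factorial : ℝ) * L (↑n + 1) ^ (n + 1) * δ ^ n)} := by
    intro r hr
    have h0 := hupos r hr 0
    have hmem : r ^ 0 / (((0:ℕ).factorial : ℝ) * L (↑(0:ℕ) + 1) ^ (0 + 1) * δ ^ 0) ∈
        {y | ∃ n : ℕ, (n : ℝ) ≤ r ∧
          y = r ^ n / ((n.factorial : ℝ) * L (↑n + 1) ^ (n + 1) * δ ^ n)} :=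
      ⟨0, by simpa using hr.le, rfl⟩
    exact lt_of_lt_of_le h0 (le_csSup (hDbdd r hr.le) hmem)
  have hlogu : ∀ r : ℝ, 0 < r → ∀ n : ℕ,
      Real.log (r ^ n / ((n.factorial : ℝ) * L (↑n + 1) ^ (n + 1) * δ ^ n))
        = n * Real.log r - (Real.log (n.factorial : ℝ)
          + ((n:ℝ) + 1) * Real.log (L (↑n + 1)) + n * Real.log δ) := by
    intro r hr n
    have hLn : 0 < L (↑n + 1) := hLpos _ (by positivity)
    have h1 : ((n.factorial : ℝ)) ≠ 0 := by
      exact_mod_cast n.factorial_pos.ne'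
    have h2 : L (↑n + 1) ^ (n + 1) ≠ 0 := (pow_pos hLn _).ne'
    have h3 : δ ^ n ≠ 0 := (pow_pos hδ n).ne'
    rw [Real.log_div (pow_pos hr n).ne' (by positivity), Real.log_mul (by positivity) h3,
      Real.log_mul h1 h2, Real.log_pow, Real.log_pow, Real.log_pow]
    push_cast
    ring
  -- upper bound
  have hsd : (0:ℝ) < Real.exp 1 / δ := by positivity
  have hmap2 : Tendsto (fun r : ℝ => Real.exp 1 / δ * r) atTop atTop :=
    Tendsto.const_mul_atTop hsd tendsto_id
  have hupper : ∀ᶠ r in atTop, Real.log (sSup {y | ∃ n : ℕ, (n : ℝ) ≤ r ∧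
      y = r ^ n / ((n.factorial : ℝ) * L (↑n + 1) ^ (n + 1) * δ ^ n)}) ≤ 6 * (δ⁻¹ * Λ r) := by
    filter_upwards [scale2 (Real.exp 1/δ) hsd, ev_sqrt,
      aux_sqrtlog (δ*(x₀+1)*(1+|Real.log δ|)),
      eventually_ge_atTop (1:ℝ), hmap2.eventually_ge_atTop (1:ℝ),
      hmap2.eventually ev_sqrt] with r hsc2 hsq hK hr1 hsr1 hsq'
    have hr0 : (0:ℝ) < r := by linarith
    have hlr0 : (0:ℝ) ≤ Real.log r := Real.log_nonneg hr1
    have hΛr0 : (0:ℝ) ≤ Λ r := le_trans (Real.sqrt_nonneg r) hsq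
    set s' : ℝ := Real.exp 1 / δ * r with hs'def
    have hΛs'0 : (0:ℝ) ≤ Λ s' := le_trans (Real.sqrt_nonneg _) hsq'
    have hlogs' : Real.log s' = 1 + Real.log r - Real.log δ := by
      rw [hs'def, Real.log_mul (by positivity) hr0.ne',
        Real.log_div (Real.exp_ne_zero 1) hδ.ne', Real.log_exp]
      ring
    set B₁ : ℝ := (x₀+1)*(Real.log r + |Real.log δ|) with hB₁def
    have hB₁0 : 0 ≤ B₁ := by
      apply mul_nonneg (by linarith) (by positivity)
    set B : ℝ := max B₁ (Λ s') with hBdef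
    -- every element's log is at most B
    have hBnd : ∀ n : ℕ, (n:ℝ) ≤ r →
        Real.log (r ^ n / ((n.factorial : ℝ) * L (↑n + 1) ^ (n + 1) * δ ^ n)) ≤ B := by
      intro n hn
      rw [hlogu r hr0 n]
      have hfac1 : (0:ℝ) ≤ Real.log (n.factorial : ℝ) :=
        Real.log_nonneg (by exact_mod_cast n.factorial_pos)
      have hLn : 0 < L (↑n + 1) := hLpos _ (by positivity)
      have hLn0 : (0:ℝ) ≤ Real.log (L (↑n + 1)) := Real.log_nonneg (hL1 _ (by positivity))
      rcases le_or_gt ((n:ℝ)) (x₀+1) with hsmall | hbig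
      · -- small n
        have hnd : -((n:ℝ) * Real.log δ) ≤ (n:ℝ) * |Real.log δ| := by
          have h := mul_le_mul_of_nonneg_left (neg_le_abs (Real.log δ)) (Nat.cast_nonneg n : (0:ℝ) ≤ n)
          linarith only [h]
        have h1 : (n:ℝ) * Real.log r ≤ (x₀+1) * Real.log r :=
          mul_le_mul_of_nonneg_right hsmall hlr0
        have h2 : (n:ℝ) * |Real.log δ| ≤ (x₀+1) * |Real.log δ| :=
          mul_le_mul_of_nonneg_right hsmall (abs_nonneg _)
        have : (n:ℝ) * Real.log r - (Real.log (n.factorial : ℝ)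
            + ((n:ℝ) + 1) * Real.log (L (↑n + 1)) + n * Real.log δ) ≤ B₁ := by
          have hnl : (0:ℝ) ≤ ((n:ℝ)+1) * Real.log (L (↑n + 1)) := by positivity
          rw [hB₁def]
          linarith only [hnd, h1, h2, hfac1, hnl]
        exact le_trans this (le_max_left _ _)
      · -- large n
        have hn1 : (1:ℝ) ≤ (n:ℝ) := by
          have : (1:ℝ) ≤ x₀ + 1 := by linarith
          linarith
        have hnpos : (0:ℝ) < (n:ℝ) := by linarith
        have hnn : 1 ≤ n := by exact_mod_cast hn1
        -- log n! ≥ n log n - n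
        have hfb : (n:ℝ) * Real.log (n:ℝ) - (n:ℝ) ≤ Real.log (n.factorial : ℝ) := by
          have h := aux_pow_le n
          have hpow : (0:ℝ) < (n:ℝ)^n := pow_pos hnpos n
          have hlog := Real.log_le_log hpow h
          rw [Real.log_mul (Real.exp_ne_zero _) (by exact_mod_cast n.factorial_pos.ne'),
            Real.log_exp, Real.log_pow] at hlog
          linarith
        -- monotonicity of L
        have hx₀n : x₀ ≤ (n:ℝ) := by linarith
        have hLmono : L (n:ℝ) ≤ L ((n:ℝ)+1) :=
          hx₀mono (Set.mem_Ici.mpr hx₀n) (Set.mem_Ici.mpr (by linarith)) (by linarith)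
        have hLnn0 : (0:ℝ) ≤ Real.log (L (n:ℝ)) := Real.log_nonneg (hL1 _ (by positivity))
        have hLnle : Real.log (L (n:ℝ)) ≤ Real.log (L ((n:ℝ)+1)) :=
          Real.log_le_log (hLpos _ (by positivity)) hLmono
        have hlam := aux_lam_ge L Λ hL1 hΛ hsr1 hnpos
        rw [Real.log_mul hnpos.ne' (hLpos _ hnpos.le).ne'] at hlam
        have hchain : (n:ℝ) * Real.log r - (Real.log (n.factorial : ℝ)
            + ((n:ℝ) + 1) * Real.log (L (↑n + 1)) + n * Real.log δ)
            ≤ (n:ℝ) * Real.log s' - (n:ℝ) * (Real.log (n:ℝ) + Real.log (L (n:ℝ))) := by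
          rw [hlogs']
          linarith only [hfb, hLn0, mul_le_mul_of_nonneg_left hLnle (le_of_lt hnpos)]
        exact le_trans (hchain.trans hlam) (le_max_right _ _)
    -- conclude upper bound
    have hsle : Real.log (sSup {y | ∃ n : ℕ, (n : ℝ) ≤ r ∧
        y = r ^ n / ((n.factorial : ℝ) * L (↑n + 1) ^ (n + 1) * δ ^ n)}) ≤ B := by
      have hle : sSup {y | ∃ n : ℕ, (n : ℝ) ≤ r ∧
          y = r ^ n / ((n.factorial : ℝ) * L (↑n + 1) ^ (n + 1) * δ ^ n)} ≤ Real.exp B := by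
        apply csSup_le ⟨_, hDne r hr0.le⟩
        rintro y ⟨n, hn, rfl⟩
        exact (Real.log_le_iff_le_exp (hupos r hr0 n)).mp (hBnd n hn)
      calc Real.log _ ≤ Real.log (Real.exp B) := Real.log_le_log (hsup_pos r hr0) hle
        _ = B := Real.log_exp B
    refine le_trans hsle ?_
    -- B ≤ 6 δ⁻¹ Λ r
    have hb1 : B₁ ≤ δ⁻¹ * Λ r := by
      have h1 : δ*(x₀+1)*(1+|Real.log δ|) * (Real.log r + 1) ≤ Λ r := le_trans hK hsq
      have h2 := mul_le_mul_of_nonneg_left h1 hδi.le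
      have h3 : δ⁻¹ * (δ*(x₀+1)*(1+|Real.log δ|) * (Real.log r + 1))
          = (x₀+1)*(1+|Real.log δ|) * (Real.log r + 1) := by
        field_simp
      rw [h3] at h2
      have h4 : B₁ ≤ (x₀+1)*(1+|Real.log δ|) * (Real.log r + 1) := by
        have he : (x₀+1)*(1+|Real.log δ|) * (Real.log r + 1) - B₁
            = (x₀+1)*( |Real.log δ| * Real.log r + 1) := by
          rw [hB₁def]; ring
        have hp : 0 ≤ (x₀+1)*( |Real.log δ| * Real.log r + 1) := by
          apply mul_nonneg (by linarith)
          have := mul_nonneg (abs_nonneg (Real.log δ)) hlr0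
          linarith
        linarith only [he.ge, he.le, hp]
      linarith
    have hb2 : Λ s' ≤ 6 * (δ⁻¹ * Λ r) := by
      have h1 : Λ s' ≤ 2 * (Real.exp 1/δ) * Λ r := hsc2
      have heq : 2 * (Real.exp 1/δ) * Λ r = (2*Real.exp 1) * (δ⁻¹ * Λ r) := by
        rw [div_eq_mul_inv]; ring
      have h6 : 2*Real.exp 1 ≤ 6 := by linarith only [he275]
      have h2 := mul_le_mul_of_nonneg_right h6 (mul_nonneg hδi.le hΛr0)
      rw [heq] at h1
      linarith only [h1, h2]
    have hb1' : δ⁻¹ * Λ r ≤ 6 * (δ⁻¹ * Λ r) := by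
      have hp := mul_nonneg hδi.le hΛr0
      linarith only [hp]
    rw [hBdef]
    exact max_le (le_trans hb1 hb1') hb2
  -- lower bound
  have hmap1 : Tendsto (fun r : ℝ => δ⁻¹ * r) atTop atTop :=
    Tendsto.const_mul_atTop hδi tendsto_id
  set Zδ : ℝ := max (max z T₁) (max 8 x₀) with hZdef
  set W₂ : ℝ := 16 + 4*|Real.log (L T₁)| with hW₂def
  have hlower : ∀ᶠ r in atTop, 1/4 * (δ⁻¹ * Λ r) ≤
      Real.log (sSup {y | ∃ n : ℕ, (n : ℝ) ≤ r ∧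
        y = r ^ n / ((n.factorial : ℝ) * L (↑n + 1) ^ (n + 1) * δ ^ n)}) := by
    filter_upwards [hmap1.eventually nearmax, hmap1.eventually (evW (Zδ+1)),
      hmap1.eventually (evW W₂), hmap1.eventually ev_sqrt,
      hmap1.eventually (eventually_ge_atTop (16:ℝ)),
      eventually_ge_atTop (1:ℝ), scale δ⁻¹ hδi]
      with r hnm hWZ' hW2' hsq hs16 hr1 hsc
    obtain ⟨hWZ, hls1⟩ := hWZ'
    obtain ⟨hW2, -⟩ := hW2'
    have hr0 : (0:ℝ) < r := by linarith
    set s : ℝ := δ⁻¹ * r with hsdef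
    have hs0 : (0:ℝ) < s := by positivity
    have hlogs0 : (0:ℝ) < Real.log s := by linarith
    have hΛ4 : (4:ℝ) ≤ Λ s := by
      have h := Real.sqrt_le_sqrt hs16
      rw [h16] at h
      linarith [hsq]
    -- pick a near maximizer
    have hne : {y | ∃ x > (0:ℝ), y = x * Real.log s - x * Real.log (x * L x)}.Nonempty :=
      ⟨_, ⟨1, one_pos, rfl⟩⟩
    have hlt : Λ s - 1 < sSup {y | ∃ x > (0:ℝ), y = x * Real.log s - x * Real.log (x * L x)} := by
      rw [← hΛ s]
      linarith
    obtain ⟨y, hy, hylt⟩ := exists_lt_of_lt_csSup hne hlt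
    obtain ⟨x, hx, rfl⟩ := hy
    obtain ⟨hx1, hxdiv, hx2Λ⟩ := hnm x hx hylt.le
    have hLx : (0:ℝ) < L x := hLpos x hx.le
    have hfxv : Λ s - 1 ≤ x * (Real.log s - Real.log x - Real.log (L x)) := by
      have h : x * (Real.log s - Real.log x - Real.log (L x))
          = x * Real.log s - x * (Real.log x + Real.log (L x)) := by ring
      rw [h, ← Real.log_mul hx.ne' hLx.ne']
      exact hylt.le
    have hxZ : Zδ + 1 ≤ x := by
      have h2 : Zδ + 1 ≤ (Λ s - 1) / Real.log s := by
        rw [le_div_iff₀ hlogs0]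
        have hZ8 : (8:ℝ) ≤ Zδ := le_trans (le_max_left 8 x₀) (le_max_right _ _)
        linarith only [hWZ, hZ8]
      linarith [hxdiv]
    have hxz : z ≤ x := by
      have h1 : z ≤ Zδ := le_trans (le_max_left _ _) (le_max_left _ _)
      linarith
    have hxT₁ : T₁ ≤ x := by
      have h1 : T₁ ≤ Zδ := le_trans (le_max_right _ _) (le_max_left _ _)
      linarith
    have hx8 : (8:ℝ) ≤ x := by
      have h1 : (8:ℝ) ≤ Zδ := le_trans (le_max_left _ _) (le_max_right _ _)
      linarith
    have hxx₀ : x₀ ≤ x := by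
      have h1 : x₀ ≤ Zδ := le_trans (le_max_right _ _) (le_max_right _ _)
      linarith
    have hLxδ : δ⁻¹ ≤ L x := hz x hxz
    have hlogLx0 : (0:ℝ) ≤ Real.log (L x) := Real.log_nonneg (hL1 x hx.le)
    have hlogx0 : (0:ℝ) ≤ Real.log x := Real.log_nonneg hx1
    have hv14 : 1/4 ≤ Real.log s - Real.log x - Real.log (L x) := by
      by_contra hcon
      push_neg at hcon
      have h1 : x * (Real.log s - Real.log x - Real.log (L x)) ≤ x * (1/4) :=
        mul_le_mul_of_nonneg_left hcon.le hx.le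
      linarith only [hfxv, h1, hx2Λ, hΛ4]
    have hvlog : Real.log s - Real.log x - Real.log (L x) ≤ Real.log s := by linarith
    have hlogs_eq : Real.log s = Real.log r - Real.log δ := by
      rw [hsdef, Real.log_mul hδi.ne' hr0.ne', Real.log_inv]
      ring
    have hxr : x ≤ r := by
      have hlogδi : Real.log δ⁻¹ ≤ Real.log (L x) := Real.log_le_log hδi hLxδ
      rw [Real.log_inv] at hlogδi
      have hlx : Real.log x ≤ Real.log r := by
        have := hv14
        rw [hlogs_eq] at this
        linarith
      calc x = Real.exp (Real.log x) := (Real.exp_log hx).symm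
        _ ≤ Real.exp (Real.log r) := Real.exp_le_exp.mpr hlx
        _ = r := Real.exp_log hr0
    set n : ℕ := ⌊x⌋₊ with hndef
    have hn1 : 1 ≤ n := by
      apply Nat.le_floor
      exact_mod_cast hx1
    have hnx : (n:ℝ) ≤ x := Nat.floor_le hx.le
    have hxn : x ≤ (n:ℝ) + 1 := (Nat.lt_floor_add_one x).le
    have hnpos : (0:ℝ) < (n:ℝ) := by
      have : ((1:ℕ):ℝ) ≤ (n:ℝ) := by exact_mod_cast hn1
      linarith
    have hnr : (n:ℝ) ≤ r := le_trans hnx hxr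
    -- log of our element is big
    have hfb : Real.log (n.factorial : ℝ) ≤ (n:ℝ) * Real.log (n:ℝ) := by
      have h : ((n.factorial : ℕ):ℝ) ≤ ((n:ℝ))^n := by
        exact_mod_cast Nat.factorial_le_pow n
      have := Real.log_le_log (by exact_mod_cast n.factorial_pos) h
      rwa [Real.log_pow] at this
    have hlogn : Real.log (n:ℝ) ≤ Real.log x := Real.log_le_log hnpos hnx
    -- L (n+1) ≤ L (x+1), and log L (x+1) ≤ log L x + 1/8
    have hLn1 : Real.log (L ((n:ℝ)+1)) ≤ Real.log (L x) + 1/8 := by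
      have hmem1 : ((n:ℝ)+1) ∈ Set.Ici x₀ := Set.mem_Ici.mpr (by linarith)
      have hmem2 : (x+1) ∈ Set.Ici x₀ := Set.mem_Ici.mpr (by linarith)
      have hL1x : L ((n:ℝ)+1) ≤ L (x+1) := hx₀mono hmem1 hmem2 (by linarith)
      have hstep1 : Real.log (L ((n:ℝ)+1)) ≤ Real.log (L (x+1)) :=
        Real.log_le_log (hLpos _ (by positivity)) hL1x
      have hstep2 := (abs_le.mp (hT₁ x (x+1) hxT₁ (by linarith))).2
      have hstep3 : Real.log (x+1) - Real.log x ≤ 1/8 := by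
        have hd : Real.log (x+1) - Real.log x = Real.log ((x+1)/x) := by
          rw [Real.log_div (by linarith) hx.ne']
        have hub := Real.log_le_sub_one_of_pos (show (0:ℝ) < (x+1)/x by positivity)
        have heq : (x+1)/x - 1 = 1/x := by field_simp; ring
        have hix : (1:ℝ)/x ≤ 1/8 := by
          rw [div_le_div_iff₀ (by linarith only [hx8]) (by norm_num)]
          linarith only [hx8]
        rw [hd]
        linarith only [hub, heq.le, heq.ge, hix]
      linarith only [hstep1, hstep2, hstep3]
    have hLxb : Real.log (L x) ≤ Real.log (L T₁) + Real.log x := by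
      have hstep := (abs_le.mp (hT₁ T₁ x (le_refl _) hxT₁)).2
      have hT₁0 : (0:ℝ) ≤ Real.log T₁ := Real.log_nonneg hT₁ge
      linarith only [hstep, hT₁0]
    have hlogx_le : Real.log x ≤ Real.log s := by linarith only [hv14, hlogLx0]
    -- the chain
    have hlogu_n := hlogu r hr0 n
    set v : ℝ := Real.log s - Real.log x - Real.log (L x) with hvdef
    clear_value v
    have hbound : Λ s / 2 ≤ (n:ℝ) * Real.log r - (Real.log (n.factorial : ℝ)
        + ((n:ℝ) + 1) * Real.log (L ((n:ℝ) + 1)) + (n:ℝ) * Real.log δ) := by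
      have hstep1 : (v - 1/8) * ((n:ℝ)) ≥ (v - 1/8) * (x - 1) := by
        apply mul_le_mul_of_nonneg_left (by linarith only [hxn]) (by linarith only [hv14])
      have hbr : Real.log s - Real.log (n:ℝ) - Real.log (L ((n:ℝ)+1)) ≥ v - 1/8 := by
        rw [hvdef]
        linarith only [hlogn, hLn1]
      have hstep0 : (n:ℝ) * (Real.log s - Real.log (n:ℝ) - Real.log (L ((n:ℝ)+1)))
          ≥ (n:ℝ) * (v - 1/8) :=
        mul_le_mul_of_nonneg_left hbr hnpos.le
      have hmain : (n:ℝ) * Real.log r - (Real.log (n.factorial : ℝ)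
          + ((n:ℝ) + 1) * Real.log (L ((n:ℝ) + 1)) + (n:ℝ) * Real.log δ)
          ≥ (n:ℝ) * (Real.log s - Real.log (n:ℝ) - Real.log (L ((n:ℝ)+1)))
            - Real.log (L ((n:ℝ)+1)) := by
      -- n log r - n log δ = n log s ; log n! ≤ n log n
        have h1 : (n:ℝ) * Real.log r - (n:ℝ) * Real.log δ = (n:ℝ) * Real.log s := by
          rw [hlogs_eq]
          ring
        linarith only [hfb, h1]
      have hLn1' : Real.log (L ((n:ℝ)+1)) ≤ Real.log (L T₁) + Real.log s + 1/8 := by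
        linarith only [hLn1, hLxb, hlogx_le]
      have hxv : Λ s - 1 ≤ x * v := hfxv
      have hvs : v ≤ Real.log s := hvlog
      have hfinal : (v - 1/8) * (x - 1) ≥ (Λ s - 1) - Real.log s - Λ s/4 - 1 := by
        have hexp : (v - 1/8) * (x - 1) = x*v - v - x/8 + 1/8 := by ring
        rw [ge_iff_le, hexp]
        linarith only [hxv, hvs, hx2Λ]
      have hcomb : (n:ℝ) * Real.log r - (Real.log (n.factorial : ℝ)
          + ((n:ℝ) + 1) * Real.log (L ((n:ℝ) + 1)) + (n:ℝ) * Real.log δ)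
          ≥ (Λ s - 1) - Real.log s - Λ s/4 - 1
            - (Real.log (L T₁) + Real.log s + 1/8) := by
        linarith only [hmain, hstep0, hstep1, hfinal, hLn1']
      -- use hW2 : W₂ log s + W₂ ≤ Λ s - 1
      have habs : Real.log (L T₁) ≤ |Real.log (L T₁)| := le_abs_self _
      have habs0 : (0:ℝ) ≤ |Real.log (L T₁)| := abs_nonneg _
      rw [hW₂def] at hW2
      have hprod : 0 ≤ |Real.log (L T₁)| * (Real.log s - 1) :=
        mul_nonneg habs0 (by linarith [hls1])
      linarith only [hcomb, hW2, hlogs0, habs, habs0, hprod, hls1]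
    -- conclude
    have hmemn : r ^ n / ((n.factorial : ℝ) * L (↑n + 1) ^ (n + 1) * δ ^ n) ∈
        {y | ∃ m : ℕ, (m : ℝ) ≤ r ∧
          y = r ^ m / ((m.factorial : ℝ) * L (↑m + 1) ^ (m + 1) * δ ^ m)} :=
      ⟨n, hnr, rfl⟩
    have hle := le_csSup (hDbdd r hr0.le) hmemn
    have hloglog : Real.log (r ^ n / ((n.factorial : ℝ) * L (↑n + 1) ^ (n + 1) * δ ^ n))
        ≤ Real.log (sSup {y | ∃ m : ℕ, (m : ℝ) ≤ r ∧
          y = r ^ m / ((m.factorial : ℝ) * L (↑m + 1) ^ (m + 1) * δ ^ m)}) :=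
      Real.log_le_log (hupos r hr0 n) hle
    have hscale' : δ⁻¹/2 * Λ r ≤ Λ s := hsc
    have hgoal : 1/4 * (δ⁻¹ * Λ r) ≤ Λ s / 2 := by linarith only [hscale']
    have h9 : Λ s / 2 ≤ Real.log (r ^ n / ((n.factorial : ℝ) * L (↑n + 1) ^ (n + 1) * δ ^ n)) := by
      rw [hlogu_n]
      exact hbound
    calc 1/4 * (δ⁻¹ * Λ r) ≤ Λ s / 2 := hgoal
      _ ≤ Real.log (r ^ n / ((n.factorial : ℝ) * L (↑n + 1) ^ (n + 1) * δ ^ n)) := h9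
      _ ≤ _ := hloglog
  obtain ⟨r₀, hr₀⟩ := eventually_atTop.mp (hlower.and hupper)
  exact ⟨r₀, fun r hr => hr₀ r hr⟩
end

section
/- Let L be non-quasianalytic with dual L̃(ρ) = L(ρ)∫_ρ^∞ du/(uL(u)), and for a > 0 define L_a = L̃ · (L/L̃)^a. Then the dual of L_a satisfies (L_a)~ = a^{-1} L̃; in particular L_a is again non-quasianalytic. -/
open MeasureTheory Set Filter
open scoped ENNReal NNReal

namespace Stmt15Aux

variable {f₀ : ℝ → ℝ}

lemma aux_split (hint : Integrable f₀) {s t : ℝ} (hst : s ≤ t) :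
    ∫ u in Ioi s, f₀ u = (∫ u in Ioc s t, f₀ u) + ∫ u in Ioi t, f₀ u := by
  rw [← setIntegral_union Ioc_disjoint_Ioi_same measurableSet_Ioi hint.integrableOn
    hint.integrableOn, Ioc_union_Ioi_eq_Ioi hst]

lemma aux_cont (hint : Integrable f₀) : Continuous fun x => ∫ u in Ioi x, f₀ u := by
  have h : ∀ x : ℝ, ∫ u in Ioi x, f₀ u
      = (∫ u in Ioi (0:ℝ), f₀ u) - ∫ u in (0:ℝ)..x, f₀ u := by
    intro x
    rcases le_or_gt 0 x with hx | hx
    · rw [intervalIntegral.integral_of_le hx, aux_split hint hx]; ring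
    · rw [intervalIntegral.integral_of_ge hx.le, aux_split hint hx.le]; ring
  exact (continuous_const.sub (hint.continuous_primitive 0)).congr fun x => (h x).symm

lemma aux_anti (h0 : ∀ u, 0 ≤ f₀ u) (hint : Integrable f₀) :
    Antitone fun x => ∫ u in Ioi x, f₀ u := by
  intro s t hst
  show (∫ u in Ioi t, f₀ u) ≤ ∫ u in Ioi s, f₀ u
  rw [aux_split hint hst]
  have : 0 ≤ ∫ u in Ioc s t, f₀ u :=
    setIntegral_nonneg measurableSet_Ioc fun u _ => h0 u
  linarith

lemma aux_pos (h0 : ∀ u, 0 ≤ f₀ u) (hint : Integrable f₀)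
    (hpos : ∀ᵐ u : ℝ, 1 < u → 0 < f₀ u) {s t : ℝ} (h1 : 1 ≤ s) (hst : s < t) :
    0 < ∫ u in Ioc s t, f₀ u := by
  rw [setIntegral_pos_iff_support_of_nonneg_ae
    (ae_of_all _ fun u => h0 u) hint.integrableOn]
  have hsub : Ioc s t \ Function.support f₀ ⊆ {u : ℝ | ¬(1 < u → 0 < f₀ u)} := by
    intro u hu
    simp only [mem_diff, Function.mem_support, not_not] at hu
    intro h
    have h1u : 1 < u := lt_of_le_of_lt h1 hu.1.1
    exact absurd (h h1u) (by rw [hu.2]; exact lt_irrefl 0)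
  have hnull : volume (Ioc s t \ Function.support f₀) = 0 :=
    measure_mono_null hsub hpos
  have : volume (Ioc s t) ≤ volume (Function.support f₀ ∩ Ioc s t)
      + volume (Ioc s t \ Function.support f₀) := by
    refine le_trans (measure_mono ?_) (measure_union_le _ _)
    intro u hu
    by_cases h : u ∈ Function.support f₀
    · exact Or.inl ⟨h, hu⟩
    · exact Or.inr ⟨hu, h⟩
  rw [hnull, add_zero, Real.volume_Ioc] at this
  have h0' : (0:ℝ≥0∞) < ENNReal.ofReal (t - s) := by
    simp [ENNReal.ofReal_pos, hst]
  exact lt_of_lt_of_le h0' this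

lemma aux_Ipos (h0 : ∀ u, 0 ≤ f₀ u) (hint : Integrable f₀)
    (hpos : ∀ᵐ u : ℝ, 1 < u → 0 < f₀ u) (x : ℝ) :
    0 < ∫ u in Ioi x, f₀ u := by
  rcases le_or_gt 1 x with hx | hx
  · rw [aux_split hint (by linarith : x ≤ x + 1)]
    have h2 : 0 ≤ ∫ u in Ioi (x+1), f₀ u :=
      setIntegral_nonneg measurableSet_Ioi fun u _ => h0 u
    have h1' : 0 < ∫ u in Ioc x (x+1), f₀ u := aux_pos h0 hint hpos hx (by linarith)
    linarith
  · calc (0:ℝ) < ∫ u in Ioi (1:ℝ), f₀ u := by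
          rw [aux_split hint (by linarith : (1:ℝ) ≤ 2)]
          have h2 : 0 ≤ ∫ u in Ioi (2:ℝ), f₀ u :=
            setIntegral_nonneg measurableSet_Ioi fun u _ => h0 u
          have h1' : 0 < ∫ u in Ioc (1:ℝ) 2, f₀ u :=
            aux_pos h0 hint hpos le_rfl one_lt_two
          linarith
      _ ≤ ∫ u in Ioi x, f₀ u :=
          aux_anti h0 hint hx.le

lemma aux_tendsto (hint : Integrable f₀) :
    Tendsto (fun x => ∫ u in Ioi x, f₀ u) atTop (nhds 0) := by
  have h : ∀ x : ℝ, x ≥ 0 → ∫ u in Ioi x, f₀ u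
      = (∫ u in Ioi (0:ℝ), f₀ u) - ∫ u in (0:ℝ)..x, f₀ u := by
    intro x hx
    rw [intervalIntegral.integral_of_le hx, aux_split hint hx]; ring
  have h2 : Tendsto (fun x : ℝ => (∫ u in Ioi (0:ℝ), f₀ u) - ∫ u in (0:ℝ)..x, f₀ u)
      atTop (nhds ((∫ u in Ioi (0:ℝ), f₀ u) - ∫ u in Ioi (0:ℝ), f₀ u)) :=
    tendsto_const_nhds.sub
      (intervalIntegral_tendsto_integral_Ioi 0 hint.integrableOn tendsto_id)
  rw [sub_self] at h2
  exact h2.congr' (by filter_upwards [eventually_ge_atTop (0:ℝ)] with x hx using (h x hx).symm)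

lemma aux_strictAnti (h0 : ∀ u, 0 ≤ f₀ u) (hint : Integrable f₀)
    (hpos : ∀ᵐ u : ℝ, 1 < u → 0 < f₀ u) {s t : ℝ} (h1 : 1 ≤ s) (hst : s < t) :
    (∫ u in Ioi t, f₀ u) < ∫ u in Ioi s, f₀ u := by
  rw [aux_split hint hst.le]
  have := aux_pos h0 hint hpos h1 hst
  linarith

lemma aux_map (hm : Measurable f₀) (h0 : ∀ u, 0 ≤ f₀ u) (hint : Integrable f₀)
    (hpos : ∀ᵐ u : ℝ, 1 < u → 0 < f₀ u) {ρ : ℝ} (hρ : 1 ≤ ρ) :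
    ((volume.restrict (Ioi ρ)).withDensity fun u => ENNReal.ofReal (f₀ u)).map
        (fun x => ∫ u in Ioi x, f₀ u)
      = volume.restrict (Ioo 0 (∫ u in Ioi ρ, f₀ u)) := by
  set I₀ : ℝ → ℝ := fun x => ∫ u in Ioi x, f₀ u with hI₀def
  set c : ℝ := I₀ ρ with hcdef
  have hc : 0 < c := aux_Ipos h0 hint hpos ρ
  set μ : Measure ℝ := (volume.restrict (Ioi ρ)).withDensity fun u => ENNReal.ofReal (f₀ u)
    with hμdef
  have hIcont : Continuous I₀ := aux_cont hint
  -- value of μ on measurable sets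
  have hμs : ∀ s : Set ℝ, MeasurableSet s →
      μ s = ENNReal.ofReal (∫ u in s ∩ Ioi ρ, f₀ u) := by
    intro s hs
    rw [hμdef, withDensity_apply _ hs, Measure.restrict_restrict hs,
      ofReal_integral_eq_lintegral_ofReal hint.integrableOn
        (ae_of_all _ fun u => h0 u)]
  have hfin : IsFiniteMeasure μ := by
    constructor
    rw [hμs univ MeasurableSet.univ]
    exact ENNReal.ofReal_lt_top
  have hImeas : Measurable I₀ := hIcont.measurable
  have hmapfin : IsFiniteMeasure (μ.map I₀) := Measure.isFiniteMeasure_map μ I₀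
  refine Measure.ext_of_Iic (μ.map I₀) (volume.restrict (Ioo 0 c)) fun t => ?_
  rw [Measure.map_apply hImeas measurableSet_Iic, hμs _ (hImeas measurableSet_Iic),
    Measure.restrict_apply measurableSet_Iic]
  rcases le_or_gt t 0 with ht | ht
  · have h1 : I₀ ⁻¹' Iic t ∩ Ioi ρ = ∅ := by
      ext u
      simp only [mem_inter_iff, mem_preimage, mem_Iic, mem_Ioi, mem_empty_iff_false, iff_false,
        not_and]
      intro hu hu2
      exact absurd hu (not_le.mpr (lt_of_le_of_lt ht (aux_Ipos h0 hint hpos u)))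
    have h2 : Iic t ∩ Ioo 0 c = ∅ := by
      ext x
      simp only [mem_inter_iff, mem_Iic, mem_Ioo, mem_empty_iff_false, iff_false, not_and]
      intro hx hx2
      linarith
    simp [h1, h2]
  rcases le_or_gt c t with hct | hct
  · have h1 : I₀ ⁻¹' Iic t ∩ Ioi ρ = Ioi ρ := by
      apply inter_eq_right.mpr
      intro u hu
      simp only [mem_preimage, mem_Iic]
      exact le_trans (aux_anti h0 hint (le_of_lt hu)) hct
    have h2 : Iic t ∩ Ioo 0 c = Ioo 0 c := by
      apply inter_eq_right.mpr
      intro x hx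
      exact le_trans (le_of_lt hx.2) hct
    rw [h1, h2, Real.volume_Ioo, sub_zero]
  · -- 0 < t < c : find w with I₀ w = t
    obtain ⟨X, hX, hXρ⟩ := (((aux_tendsto hint).eventually_lt_const ht).and
      (eventually_ge_atTop ρ)).exists
    have hIX : I₀ X < t := hX
    have hsub : Ioo (I₀ X) (I₀ ρ) ⊆ I₀ '' Ioo ρ X :=
      intermediate_value_Ioo' hXρ hIcont.continuousOn
    obtain ⟨w, hw, hIw⟩ := hsub ⟨hIX, hct⟩
    have hwρ : ρ < w := hw.1
    have h1 : I₀ ⁻¹' Iic t ∩ Ioi ρ = Ici w := by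
      ext u
      simp only [mem_inter_iff, mem_preimage, mem_Iic, mem_Ioi, mem_Ici]
      constructor
      · rintro ⟨hu1, hu2⟩
        by_contra hlt
        push_neg at hlt
        have h3 : I₀ w < I₀ u := aux_strictAnti h0 hint hpos (le_trans hρ hu2.le) hlt
        rw [hIw] at h3
        exact absurd hu1 (not_le.mpr h3)
      · intro hu
        refine ⟨?_, lt_of_lt_of_le hwρ hu⟩
        calc I₀ u ≤ I₀ w := aux_anti h0 hint hu
          _ = t := hIw
    have h2 : Iic t ∩ Ioo 0 c = Ioc 0 t := by
      ext x
      simp only [mem_inter_iff, mem_Iic, mem_Ioo, mem_Ioc]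
      constructor
      · rintro ⟨hx1, hx2, _⟩; exact ⟨hx2, hx1⟩
      · rintro ⟨hx1, hx2⟩; exact ⟨hx2, hx1, lt_of_le_of_lt hx2 hct⟩
    rw [h1, h2, Real.volume_Ioc, sub_zero]
    have : ∫ u in Ici w, f₀ u = t := by
      rw [integral_Ici_eq_integral_Ioi]
      exact hIw
    rw [this]

end Stmt15Aux


open Stmt15Aux

theorem stmt15 (L Lt La : ℝ → ℝ) (a : ℝ) (ha : 0 < a)
    (hL1 : ∀ ρ ≥ (0:ℝ), 1 ≤ L ρ)
    (hmono : ∃ x₀, MonotoneOn L (Set.Ici x₀))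
    (htend : Tendsto L atTop atTop)
    (hint : IntegrableOn (fun u => 1 / (u * L u)) (Ioi 1))
    (hLt : ∀ ρ, Lt ρ = L ρ * ∫ u in Ioi ρ, 1 / (u * L u))
    (hLa : ∀ ρ, La ρ = Lt ρ * (L ρ / Lt ρ) ^ a) :
    IntegrableOn (fun u => 1 / (u * La u)) (Ioi 1) ∧
    ∀ ρ ≥ (1:ℝ), La ρ * ∫ u in Ioi ρ, 1 / (u * La u) = a⁻¹ * Lt ρ := by
  obtain ⟨g, hgm, hgae⟩ := hint.aemeasurable
  set f₀ : ℝ → ℝ := (Ioi 1).indicator (fun u => max (g u) 0) with hf₀def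
  have hm : Measurable f₀ := (hgm.max measurable_const).indicator measurableSet_Ioi
  have h0 : ∀ u, 0 ≤ f₀ u := fun u =>
    Set.indicator_nonneg (fun x _ => le_max_right _ _) u
  have hfpos : ∀ u : ℝ, 1 < u → 0 < 1 / (u * L u) := by
    intro u hu
    have hLu : 1 ≤ L u := hL1 u (by linarith)
    have : 0 < u * L u := mul_pos (by linarith) (by linarith)
    positivity
  have hfeq : f₀ =ᵐ[volume.restrict (Ioi 1)] (fun u => 1 / (u * L u)) := by
    filter_upwards [hgae, ae_restrict_mem measurableSet_Ioi] with u hgu hu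
    have h1u : (1:ℝ) < u := hu
    rw [hf₀def, Set.indicator_of_mem hu, ← hgu]
    exact max_eq_left (hfpos u h1u).le
  have hintf₀ : Integrable f₀ := by
    refine IntegrableOn.integrable_indicator ?_ measurableSet_Ioi
    refine hint.congr ?_
    filter_upwards [hgae, ae_restrict_mem measurableSet_Ioi] with u hgu hu
    rw [← hgu]
    exact (max_eq_left (hfpos u hu).le).symm
  have hpos : ∀ᵐ u : ℝ, 1 < u → 0 < f₀ u := by
    have h := (ae_restrict_iff' measurableSet_Ioi).mp hfeq
    filter_upwards [h] with u hu h1u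
    rw [hu h1u]
    exact hfpos u h1u
  set I₀ : ℝ → ℝ := fun x => ∫ u in Ioi x, f₀ u with hI₀def
  have hIval : ∀ x : ℝ, 1 ≤ x → I₀ x = ∫ u in Ioi x, 1 / (u * L u) := by
    intro x hx
    exact integral_congr_ae (ae_restrict_of_ae_restrict_of_subset (Ioi_subset_Ioi hx) hfeq)
  have hIpos : ∀ x : ℝ, 0 < I₀ x := aux_Ipos h0 hintf₀ hpos
  have hImeas : Measurable I₀ := (aux_cont hintf₀).measurable
  have hrpowmeas : Measurable fun t : ℝ => t ^ (a - 1) := measurable_id.pow_const _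
  -- pointwise identity
  have hcong : ∀ ρ' : ℝ, 1 ≤ ρ' →
      (fun u => 1 / (u * La u)) =ᵐ[volume.restrict (Ioi ρ')]
      (fun u => (Real.toNNReal (f₀ u)) • (I₀ u) ^ (a - 1)) := by
    intro ρ' hρ'
    filter_upwards [ae_restrict_of_ae_restrict_of_subset (Ioi_subset_Ioi hρ') hfeq,
      ae_restrict_mem measurableSet_Ioi] with u hfu hu
    have h1u : (1:ℝ) < u := lt_of_le_of_lt hρ' hu
    have hLu : 1 ≤ L u := hL1 u (by linarith)
    have hcu : 0 < I₀ u := hIpos u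
    have hLtu : Lt u = L u * I₀ u := by rw [hLt u, hIval u h1u.le]
    have hLau : La u = L u * I₀ u * ((I₀ u) ^ a)⁻¹ := by
      rw [hLa u, hLtu]
      have hdiv : L u / (L u * I₀ u) = (I₀ u)⁻¹ := by
        field_simp
      rw [hdiv, Real.inv_rpow hcu.le]
    have hsmul : (Real.toNNReal (f₀ u)) • (I₀ u) ^ (a - 1)
        = f₀ u * (I₀ u) ^ (a - 1) := by
      rw [NNReal.smul_def, smul_eq_mul, Real.coe_toNNReal _ (h0 u)]
    rw [hsmul, hfu, hLau, Real.rpow_sub hcu, Real.rpow_one]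
    have hu0 : u ≠ 0 := by positivity
    have hL0 : L u ≠ 0 := by positivity
    have hc0 : I₀ u ≠ 0 := hcu.ne'
    have hca0 : (I₀ u) ^ a ≠ 0 := (Real.rpow_pos_of_pos hcu a).ne'
    field_simp
    try ring
    try tauto
  -- the value of the key integral
  have hkey : ∀ ρ' : ℝ, 1 ≤ ρ' →
      (∫ u in Ioi ρ', 1 / (u * La u)) = (I₀ ρ') ^ a / a := by
    intro ρ' hρ'
    have h1 : (∫ u in Ioi ρ', 1 / (u * La u))
        = ∫ u in Ioi ρ', (Real.toNNReal (f₀ u)) • (I₀ u) ^ (a - 1) :=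
      integral_congr_ae (hcong ρ' hρ')
    have h2 : ∫ u in Ioi ρ', (Real.toNNReal (f₀ u)) • (I₀ u) ^ (a - 1)
        = ∫ u, (I₀ u) ^ (a - 1)
            ∂((volume.restrict (Ioi ρ')).withDensity fun u => ((f₀ u).toNNReal : ℝ≥0∞)) := by
      rw [integral_withDensity_eq_integral_smul hm.real_toNNReal
        (fun u => (I₀ u) ^ (a - 1))]
    have h3 : ∫ u, (I₀ u) ^ (a - 1)
            ∂((volume.restrict (Ioi ρ')).withDensity fun u => ((f₀ u).toNNReal : ℝ≥0∞))
        = ∫ t in Ioo 0 (I₀ ρ'), t ^ (a - 1) := by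
      have hmm : (fun u => ((f₀ u).toNNReal : ℝ≥0∞)) = fun u => ENNReal.ofReal (f₀ u) := rfl
      rw [hmm, ← aux_map hm h0 hintf₀ hpos hρ',
        integral_map hImeas.aemeasurable hrpowmeas.aestronglyMeasurable]
    have h4 : (∫ t in Ioo 0 (I₀ ρ'), t ^ (a - 1)) = (I₀ ρ') ^ a / a := by
      rw [← integral_Ioc_eq_integral_Ioo,
        ← intervalIntegral.integral_of_le (hIpos ρ').le,
        integral_rpow (Or.inl (by linarith : (-1:ℝ) < a - 1))]
      rw [sub_add_cancel, Real.zero_rpow ha.ne', sub_zero]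
    rw [h1, h2, h3, h4]
  constructor
  · -- integrability
    have hrint : Integrable (fun t : ℝ => t ^ (a - 1))
        (volume.restrict (Ioo 0 (I₀ 1))) :=
      ((intervalIntegral.intervalIntegrable_rpow' (by linarith : (-1:ℝ) < a - 1)).1).mono_set
        Ioo_subset_Ioc_self
    rw [← aux_map hm h0 hintf₀ hpos le_rfl] at hrint
    have h2 := (integrable_map_measure hrpowmeas.aestronglyMeasurable
      hImeas.aemeasurable).mp hrint
    have h3 := (integrable_withDensity_iff_integrable_smul hm.real_toNNReal).mp h2
    exact h3.congr (hcong 1 le_rfl).symm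
  · intro ρ hρ
    rw [hkey ρ hρ, hLa ρ, hLt ρ, ← hIval ρ hρ]
    have hcρ : 0 < I₀ ρ := hIpos ρ
    have hLρ : 1 ≤ L ρ := hL1 ρ (by linarith)
    have hdiv : L ρ / (L ρ * I₀ ρ) = (I₀ ρ)⁻¹ := by field_simp
    rw [hdiv, Real.inv_rpow hcρ.le]
    have hca0 : (I₀ ρ) ^ a ≠ 0 := (Real.rpow_pos_of_pos hcρ a).ne'
    field_simp
    try ring
    try tauto
end

section
/- Let L : [0,∞) → [1,∞) satisfy L(ρ) → ∞, γ(n) = L(n)^n, Λ_L(r) = sup_{x>0}[x log r − x log(xL(x))], and define E₁(z) = Σ_{n≥0} z^n/(n! γ(n+1)). Assume L is slowly varying and Λ_L satisfies Λ_L(rt) ≤ t Λ_L(r) for r > r₀, t > 1. Then there exists C > 0 such that log |E₁(z)| ≤ C(Λ_L(|z|) + 1) for all z ∈ ℂ. -/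
open Filter

private lemma aux_pow_self_le (n : ℕ) : (n : ℝ) ^ n ≤ Real.exp 1 ^ n * n.factorial := by
  induction n with
  | zero => simp
  | succ n ih =>
    rcases Nat.eq_zero_or_pos n with rfl | hn
    · simpa using Real.one_le_exp zero_le_one
    · have hn' : (0:ℝ) < n := by exact_mod_cast hn
      have hinv : (n:ℝ) * (1 / (n:ℝ)) = 1 := by field_simp
      have h1 : ((n:ℝ) + 1) ≤ (n:ℝ) * Real.exp (1 / (n:ℝ)) := by
        nlinarith [Real.add_one_le_exp (1 / (n:ℝ))]
      have hpow : ((n:ℝ) + 1) ^ n ≤ (n:ℝ) ^ n * Real.exp 1 := by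
        calc ((n:ℝ) + 1) ^ n ≤ ((n:ℝ) * Real.exp (1 / (n:ℝ))) ^ n :=
              pow_le_pow_left₀ (by positivity) h1 n
          _ = (n:ℝ) ^ n * Real.exp (1 / (n:ℝ)) ^ n := mul_pow _ _ n
          _ = (n:ℝ) ^ n * Real.exp 1 := by
              rw [← Real.exp_nat_mul]
              congr 1
              field_simp
      have hfn : (0:ℝ) ≤ n.factorial := by positivity
      have hexp : (0:ℝ) < Real.exp 1 := Real.exp_pos 1
      have : ((n:ℝ) + 1) ^ (n+1) ≤ Real.exp 1 ^ (n+1) * (n+1).factorial := by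
        calc ((n:ℝ) + 1) ^ (n+1) = ((n:ℝ) + 1) ^ n * ((n:ℝ) + 1) := by ring
          _ ≤ ((n:ℝ) ^ n * Real.exp 1) * ((n:ℝ) + 1) := by
              apply mul_le_mul_of_nonneg_right hpow (by positivity)
          _ ≤ ((Real.exp 1 ^ n * n.factorial) * Real.exp 1) * ((n:ℝ) + 1) := by
              apply mul_le_mul_of_nonneg_right _ (by positivity)
              exact mul_le_mul_of_nonneg_right ih hexp.le
          _ = Real.exp 1 ^ (n+1) * ((n.factorial : ℝ) * ((n:ℝ) + 1)) := by ring
          _ = Real.exp 1 ^ (n+1) * (n+1).factorial := by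
              rw [Nat.factorial_succ]; push_cast; ring
      push_cast
      exact this

private lemma aux_two_pow_le (n : ℕ) : (2:ℝ) ^ n ≤ 2 * n.factorial := by
  induction n with
  | zero => norm_num
  | succ n ih =>
    rcases Nat.eq_zero_or_pos n with rfl | hn
    · norm_num
    · have h2 : (2:ℝ) ≤ (n:ℝ) + 1 := by
        have : (1:ℕ) ≤ n := hn
        have : (1:ℝ) ≤ (n:ℝ) := by exact_mod_cast this
        linarith
      have hf : (0:ℝ) < n.factorial := by
        exact_mod_cast n.factorial_pos
      calc (2:ℝ) ^ (n+1) = 2 * 2 ^ n := by ring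
        _ ≤ 2 * (2 * n.factorial) := by nlinarith
        _ ≤ 2 * (((n:ℝ) + 1) * n.factorial) := by nlinarith
        _ = 2 * (n+1).factorial := by rw [Nat.factorial_succ]; push_cast; ring

set_option maxHeartbeats 1000000 in
theorem stmt19 (L Λ : ℝ → ℝ) (E₁ : ℂ → ℂ)
    (hL1 : ∀ x ≥ (0:ℝ), 1 ≤ L x)
    (htend : Tendsto L atTop atTop)
    (hdiff : Differentiable ℝ L)
    (hslow : Tendsto (fun ρ => ρ * deriv L ρ / L ρ) atTop (nhds 0))
    (hΛ : ∀ r, Λ r = sSup {y | ∃ x > (0:ℝ), y = x * Real.log r - x * Real.log (x * L x)})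
    (hsub : ∃ r₀ : ℝ, ∀ r > r₀, ∀ t > (1:ℝ), Λ (r * t) ≤ t * Λ r)
    (hE₁ : ∀ z : ℂ, HasSum
      (fun n : ℕ => z ^ n / (((n.factorial : ℝ) * L (n + 1) ^ (n + 1) : ℝ) : ℂ)) (E₁ z)) :
    ∃ C > (0:ℝ), ∀ z : ℂ, Real.log ‖E₁ z‖ ≤ C * (Λ ‖z‖ + 1) := by
  obtain ⟨r₀, hr₀⟩ := hsub
  have he1_pos : (0:ℝ) < Real.exp 1 := Real.exp_pos 1
  have he1_ge : (2:ℝ) ≤ Real.exp 1 := by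
    have := Real.add_one_le_exp (1:ℝ); linarith
  set e1 := Real.exp 1 with he1
  set R := max r₀ 1 with hR
  have hR1 : (1:ℝ) ≤ R := le_max_right _ _
  have hCpos : (0:ℝ) < 4 * e1 * (R + 1) + 2 := by nlinarith
  refine ⟨4 * e1 * (R + 1) + 2, hCpos, fun z => ?_⟩
  set r := ‖z‖ with hr
  have hr0 : (0:ℝ) ≤ r := norm_nonneg z
  -- upper bound for elements of the defining set
  have hub : ∀ s : ℝ, 0 ≤ s →
      ∀ y ∈ {y | ∃ x > (0:ℝ), y = x * Real.log s - x * Real.log (x * L x)}, y ≤ max s 1 := by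
    intro s hs y hy
    obtain ⟨x, hx, rfl⟩ := hy
    have hLx : 1 ≤ L x := hL1 x hx.le
    have hMpos : (0:ℝ) < max s 1 := lt_of_lt_of_le one_pos (le_max_right _ _)
    have hlogs : Real.log s ≤ Real.log (max s 1) := by
      rcases eq_or_lt_of_le hs with h | h
      · rw [← h, Real.log_zero]
        exact Real.log_nonneg (le_max_right _ _)
      · exact Real.log_le_log h (le_max_left _ _)
    have hlmul : Real.log (x * L x) = Real.log x + Real.log (L x) :=
      Real.log_mul (ne_of_gt hx) (by linarith)
    have hlL : 0 ≤ Real.log (L x) := Real.log_nonneg hLx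
    have hdiv := Real.log_le_sub_one_of_pos (show (0:ℝ) < max s 1 / x by positivity)
    rw [Real.log_div (ne_of_gt hMpos) (ne_of_gt hx)] at hdiv
    have hxx : x * (max s 1 / x) = max s 1 := by field_simp
    have h1 : x * Real.log (max s 1) - x * Real.log x ≤ max s 1 := by
      nlinarith [mul_le_mul_of_nonneg_left hdiv hx.le]
    have h2 : x * Real.log s ≤ x * Real.log (max s 1) :=
      mul_le_mul_of_nonneg_left hlogs hx.le
    rw [hlmul]
    nlinarith [mul_nonneg hx.le hlL]
  have hne : ∀ s : ℝ,
      {y | ∃ x > (0:ℝ), y = x * Real.log s - x * Real.log (x * L x)}.Nonempty :=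
    fun s => ⟨_, 1, one_pos, rfl⟩
  have hBdd : ∀ s : ℝ, 0 ≤ s →
      BddAbove {y | ∃ x > (0:ℝ), y = x * Real.log s - x * Real.log (x * L x)} :=
    fun s hs => ⟨max s 1, fun y hy => hub s hs y hy⟩
  have hΛle : ∀ s : ℝ, 0 ≤ s → Λ s ≤ max s 1 := by
    intro s hs
    rw [hΛ]
    exact csSup_le (hne s) (hub s hs)
  have hmem : ∀ s : ℝ, 0 ≤ s → ∀ x > (0:ℝ),
      x * Real.log s - x * Real.log (x * L x) ≤ Λ s := by
    intro s hs x hx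
    rw [hΛ]
    exact le_csSup (hBdd s hs) ⟨x, hx, rfl⟩
  -- Λ is nonnegative
  have hΛnn : ∀ s : ℝ, 0 ≤ s → 0 ≤ Λ s := by
    intro s hs
    have hLcont : Continuous L := hdiff.continuous
    have hL0 : (1:ℝ) ≤ L 0 := hL1 0 le_rfl
    have h1 : Tendsto (fun x : ℝ => 1 / L x) (nhds 0) (nhds (1 / L 0)) :=
      Tendsto.div tendsto_const_nhds (hLcont.tendsto 0) (by linarith)
    have hxl : Tendsto (fun x : ℝ => x * L x) (nhds 0) (nhds 0) := by
      have := (continuous_id.mul hLcont).tendsto (0:ℝ)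
      convert this using 2 <;> simp
    have h2 : Tendsto (fun x : ℝ => (x * L x) * Real.log (x * L x)) (nhds 0) (nhds 0) := by
      have hc := Real.continuous_mul_log.tendsto (0:ℝ)
      have := hc.comp hxl
      convert this using 2 <;> simp
    have key : Tendsto (fun x : ℝ => (1 / L x) * ((x * L x) * Real.log (x * L x)))
        (nhds 0) (nhds 0) := by
      have := h1.mul h2
      simpa using this
    have hcont2 : Tendsto (fun x : ℝ => x * Real.log (x * L x)) (nhdsWithin 0 (Set.Ioi 0))
        (nhds 0) := by
      apply (key.mono_left nhdsWithin_le_nhds).congr'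
      filter_upwards [self_mem_nhdsWithin] with x hx
      have hxp : (0:ℝ) < x := hx
      have hLxne : L x ≠ 0 := by
        have := hL1 x hxp.le; linarith
      field_simp
    have hcont3 : Tendsto (fun x : ℝ => x * Real.log s) (nhdsWithin 0 (Set.Ioi 0)) (nhds 0) := by
      have : Tendsto (fun x : ℝ => x * Real.log s) (nhds 0) (nhds 0) := by
        have hc : Continuous (fun x : ℝ => x * Real.log s) := continuous_id.mul continuous_const
        have := hc.tendsto (0:ℝ)
        simpa using this
      exact this.mono_left nhdsWithin_le_nhds
    have hcont : Tendsto (fun x : ℝ => x * Real.log s - x * Real.log (x * L x))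
        (nhdsWithin 0 (Set.Ioi 0)) (nhds 0) := by
      have := hcont3.sub hcont2
      simpa using this
    have hev2 : ∀ᶠ x in nhdsWithin 0 (Set.Ioi 0),
        x * Real.log s - x * Real.log (x * L x) ≤ Λ s := by
      filter_upwards [self_mem_nhdsWithin] with x hx
      exact hmem s hs x hx
    exact le_of_tendsto hcont hev2
  -- key pointwise estimate from the sup
  have hkey : ∀ s : ℝ, 0 < s → ∀ n : ℕ,
      s ^ (n+1) ≤ Real.exp (Λ s) * (((n:ℝ) + 1) * L ((n:ℝ) + 1)) ^ (n+1) := by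
    intro s hs n
    have hxpos : (0:ℝ) < (n:ℝ) + 1 := by positivity
    have hL' : (1:ℝ) ≤ L ((n:ℝ) + 1) := hL1 _ (by positivity)
    have h := hmem s hs.le ((n:ℝ) + 1) hxpos
    have hbpos : (0:ℝ) < ((n:ℝ) + 1) * L ((n:ℝ) + 1) := by nlinarith
    have hlog1 : Real.log (s ^ (n+1)) = ((n:ℝ) + 1) * Real.log s := by
      rw [Real.log_pow]; push_cast; ring
    have hlog2 : Real.log ((((n:ℝ) + 1) * L ((n:ℝ) + 1)) ^ (n+1))
        = ((n:ℝ) + 1) * Real.log (((n:ℝ) + 1) * L ((n:ℝ) + 1)) := by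
      rw [Real.log_pow]; push_cast; ring
    have h2 : Real.log (s ^ (n+1))
        ≤ Λ s + Real.log ((((n:ℝ) + 1) * L ((n:ℝ) + 1)) ^ (n+1)) := by
      rw [hlog1, hlog2]; linarith
    calc s ^ (n+1) = Real.exp (Real.log (s ^ (n+1))) := (Real.exp_log (by positivity)).symm
      _ ≤ Real.exp (Λ s + Real.log ((((n:ℝ) + 1) * L ((n:ℝ) + 1)) ^ (n+1))) :=
          Real.exp_le_exp.mpr h2
      _ = Real.exp (Λ s) * (((n:ℝ) + 1) * L ((n:ℝ) + 1)) ^ (n+1) := by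
          rw [Real.exp_add, Real.exp_log (by positivity)]
  -- the majorant series
  have hdenpos : ∀ n : ℕ, (0:ℝ) < (n.factorial : ℝ) * L ((n:ℝ) + 1) ^ (n+1) := by
    intro n
    have h1 : (0:ℝ) < n.factorial := by exact_mod_cast n.factorial_pos
    have h2 : (1:ℝ) ≤ L ((n:ℝ) + 1) := hL1 _ (by positivity)
    exact mul_pos h1 (pow_pos (by linarith) _)
  set g : ℕ → ℝ := fun n => r ^ n / ((n.factorial : ℝ) * L ((n:ℝ) + 1) ^ (n+1)) with hg
  have hgnonneg : ∀ n, 0 ≤ g n := fun n => div_nonneg (pow_nonneg hr0 n) (hdenpos n).le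
  have hgle : ∀ n, g n ≤ r ^ n / n.factorial := by
    intro n
    have h1 : (0:ℝ) < n.factorial := by exact_mod_cast n.factorial_pos
    have h2 : (1:ℝ) ≤ L ((n:ℝ) + 1) := hL1 _ (by positivity)
    have h3 : (n.factorial : ℝ) ≤ (n.factorial : ℝ) * L ((n:ℝ) + 1) ^ (n+1) := by
      nlinarith [one_le_pow₀ h2 (n := n+1), pow_pos (show (0:ℝ) < L ((n:ℝ)+1) by linarith) (n+1)]
    exact div_le_div_of_nonneg_left (pow_nonneg hr0 n) h1 h3
  have hsummable : Summable g :=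
    Summable.of_nonneg_of_le hgnonneg hgle (Real.summable_pow_div_factorial r)
  have habs : ∀ n : ℕ,
      ‖z ^ n / (((n.factorial : ℝ) * L ((n:ℝ) + 1) ^ (n+1) : ℝ) : ℂ)‖ = g n := by
    intro n
    rw [norm_div, norm_pow, Complex.norm_real, Real.norm_of_nonneg (hdenpos n).le]
  have hEle : ‖E₁ z‖ ≤ ∑' n, g n := by
    rw [← (hE₁ z).tsum_eq]
    have h2 : Summable fun n : ℕ =>
        ‖z ^ n / (((n.factorial : ℝ) * L ((n:ℝ) + 1) ^ (n+1) : ℝ) : ℂ)‖ :=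
      hsummable.congr fun n => (habs n).symm
    calc ‖∑' n : ℕ, z ^ n / (((n.factorial : ℝ) * L ((n:ℝ) + 1) ^ (n+1) : ℝ) : ℂ)‖
        = ‖∑' n : ℕ, z ^ n / (((n.factorial : ℝ) * L ((n:ℝ) + 1) ^ (n+1) : ℝ) : ℂ)‖ :=
          rfl
      _ ≤ ∑' n : ℕ, ‖z ^ n / (((n.factorial : ℝ) * L ((n:ℝ) + 1) ^ (n+1) : ℝ) : ℂ)‖ :=
          norm_tsum_le_tsum_norm h2
      _ = ∑' n, g n := tsum_congr fun n => habs n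
  have hΛr : 0 ≤ Λ r := hΛnn r hr0
  rcases le_or_gt (‖E₁ z‖) 1 with hE1 | hE1
  · have hlog := Real.log_nonpos (norm_nonneg _) hE1
    nlinarith [mul_nonneg hCpos.le hΛr]
  · rcases le_or_gt r 1 with hr1 | hr1
    · -- small r : the sum is at most 4
      have hterm : ∀ n, g n ≤ (1/2:ℝ) ^ n * 2 := by
        intro n
        have hfpos : (0:ℝ) < n.factorial := by exact_mod_cast n.factorial_pos
        have hrn : r ^ n ≤ 1 := pow_le_one₀ hr0 hr1
        have h1 : g n ≤ 1 / n.factorial := by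
          calc g n ≤ r ^ n / n.factorial := hgle n
            _ ≤ 1 / n.factorial := by gcongr
        have hhalf : ((1:ℝ)/2) ^ n * 2 ^ n = 1 := by
          rw [← mul_pow]; norm_num
        have h2 : (1:ℝ) / n.factorial ≤ (1/2:ℝ) ^ n * 2 := by
          rw [div_le_iff₀ hfpos]
          nlinarith [mul_le_mul_of_nonneg_left (aux_two_pow_le n)
            (pow_nonneg (show (0:ℝ) ≤ 1/2 by norm_num) n), hhalf]
        linarith
      have hs2 : Summable (fun n : ℕ => (1/2:ℝ) ^ n * 2) :=
        (summable_geometric_of_lt_one (by norm_num) (by norm_num)).mul_right 2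
      have hsum4 : (∑' n, g n) ≤ 4 := by
        calc (∑' n, g n) ≤ ∑' n, (1/2:ℝ) ^ n * 2 := Summable.tsum_le_tsum hterm hsummable hs2
          _ = (∑' n : ℕ, (1/2:ℝ) ^ n) * 2 := tsum_mul_right
          _ = 4 := by rw [tsum_geometric_of_lt_one (by norm_num) (by norm_num)]; norm_num
      have hlogE : Real.log (‖E₁ z‖) ≤ Real.log 4 :=
        Real.log_le_log (by linarith) (le_trans hEle hsum4)
      have hlog4 : Real.log 4 ≤ 3 := by
        nlinarith [Real.log_le_sub_one_of_pos (show (0:ℝ) < 4 by norm_num)]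
      nlinarith [mul_nonneg hCpos.le hΛr]
    · -- large r
      set X := Real.exp (Λ (r * (4 * e1))) with hX
      have hXpos : (0:ℝ) < X := Real.exp_pos _
      have hs' : (0:ℝ) < r * (4 * e1) := by nlinarith
      have hterm : ∀ n, g n ≤ (1/2:ℝ) ^ n * X := by
        intro n
        have hk := hkey (r * (4 * e1)) hs' n
        have hL' : (1:ℝ) ≤ L ((n:ℝ) + 1) := hL1 _ (by positivity)
        have hLp : (0:ℝ) < L ((n:ℝ) + 1) ^ (n+1) := pow_pos (by linarith) _
        have hA : (0:ℝ) < (n.factorial : ℝ) := by exact_mod_cast n.factorial_pos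
        have hN : ((n:ℝ) + 1) ≤ 4 * 2 ^ n := by
          have h1 : (n : ℝ) < 2 ^ n := by exact_mod_cast (Nat.lt_two_pow_self : n < 2 ^ n)
          have h2 : (1:ℝ) ≤ 2 ^ n := one_le_pow₀ (by norm_num : (1:ℝ) ≤ 2)
          nlinarith
        have hstep1 : ((n:ℝ) + 1) ^ (n+1) ≤ e1 ^ (n+1) * (((n:ℝ) + 1) * n.factorial) := by
          have h := aux_pow_self_le (n+1)
          rw [Nat.factorial_succ] at h
          push_cast at h
          exact h
        have hrpow : r ^ n ≤ r ^ (n+1) := pow_le_pow_right₀ hr1.le (Nat.le_succ n)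
        have hclaim : r ^ n * 2 ^ n * ((n:ℝ) + 1) ^ (n+1)
            ≤ (n.factorial : ℝ) * (r * (4 * e1)) ^ (n+1) := by
          calc r ^ n * 2 ^ n * ((n:ℝ) + 1) ^ (n+1)
              ≤ r ^ n * 2 ^ n * (e1 ^ (n+1) * (((n:ℝ) + 1) * n.factorial)) := by
                apply mul_le_mul_of_nonneg_left hstep1 (by positivity)
            _ ≤ r ^ n * 2 ^ n * (e1 ^ (n+1) * ((4 * 2 ^ n) * n.factorial)) := by
                apply mul_le_mul_of_nonneg_left _ (by positivity)
                apply mul_le_mul_of_nonneg_left _ (by positivity)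
                exact mul_le_mul_of_nonneg_right hN hA.le
            _ = (r ^ n * (n.factorial : ℝ)) * (e1 ^ (n+1) * 4 ^ (n+1)) := by
                have h4 : (4:ℝ) ^ (n+1) = 4 * (2 ^ n * 2 ^ n) := by
                  have h40 : (4:ℝ) ^ n = 2 ^ n * 2 ^ n := by rw [← mul_pow]; norm_num
                  rw [pow_succ, h40]; ring
                rw [h4]; ring
            _ ≤ (r ^ (n+1) * (n.factorial : ℝ)) * (e1 ^ (n+1) * 4 ^ (n+1)) := by
                apply mul_le_mul_of_nonneg_right _ (by positivity)
                exact mul_le_mul_of_nonneg_right hrpow hA.le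
            _ = (n.factorial : ℝ) * (r * (4 * e1)) ^ (n+1) := by
                rw [mul_pow, mul_pow]; ring
        have hQpos : (0:ℝ) < ((n:ℝ) + 1) ^ (n+1) := by positivity
        have hmain : r ^ n * 2 ^ n ≤ (n.factorial : ℝ) * X * L ((n:ℝ) + 1) ^ (n+1) := by
          have h5 : (n.factorial : ℝ) * (r * (4 * e1)) ^ (n+1)
              ≤ (n.factorial : ℝ) * (X * (((n:ℝ) + 1) ^ (n+1) * L ((n:ℝ) + 1) ^ (n+1))) := by
            apply mul_le_mul_of_nonneg_left _ hA.le
            rw [← mul_pow]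
            exact hk
          have h6 : r ^ n * 2 ^ n * ((n:ℝ) + 1) ^ (n+1)
              ≤ ((n.factorial : ℝ) * X * L ((n:ℝ) + 1) ^ (n+1)) * ((n:ℝ) + 1) ^ (n+1) := by
            calc r ^ n * 2 ^ n * ((n:ℝ) + 1) ^ (n+1)
                ≤ (n.factorial : ℝ) * (r * (4 * e1)) ^ (n+1) := hclaim
              _ ≤ (n.factorial : ℝ) * (X * (((n:ℝ) + 1) ^ (n+1) * L ((n:ℝ) + 1) ^ (n+1))) := h5
              _ = ((n.factorial : ℝ) * X * L ((n:ℝ) + 1) ^ (n+1)) * ((n:ℝ) + 1) ^ (n+1) := by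
                  ring
          exact le_of_mul_le_mul_right h6 hQpos
        have hden : (0:ℝ) < (n.factorial : ℝ) * L ((n:ℝ) + 1) ^ (n+1) := hdenpos n
        have hhalf : ((1:ℝ)/2) ^ n * 2 ^ n = 1 := by
          rw [← mul_pow]; norm_num
        show r ^ n / ((n.factorial : ℝ) * L ((n:ℝ) + 1) ^ (n+1)) ≤ (1/2:ℝ) ^ n * X
        rw [div_le_iff₀ hden]
        calc r ^ n = ((1/2:ℝ) ^ n * 2 ^ n) * r ^ n := by rw [hhalf, one_mul]
          _ = (1/2:ℝ) ^ n * (r ^ n * 2 ^ n) := by ring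
          _ ≤ (1/2:ℝ) ^ n * ((n.factorial : ℝ) * X * L ((n:ℝ) + 1) ^ (n+1)) := by
              apply mul_le_mul_of_nonneg_left hmain (by positivity)
          _ = (1/2:ℝ) ^ n * X * ((n.factorial : ℝ) * L ((n:ℝ) + 1) ^ (n+1)) := by ring
      have hs2 : Summable (fun n : ℕ => (1/2:ℝ) ^ n * X) :=
        (summable_geometric_of_lt_one (by norm_num) (by norm_num)).mul_right X
      have hsumX : (∑' n, g n) ≤ 2 * X := by
        calc (∑' n, g n) ≤ ∑' n, (1/2:ℝ) ^ n * X := Summable.tsum_le_tsum hterm hsummable hs2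
          _ = (∑' n : ℕ, (1/2:ℝ) ^ n) * X := tsum_mul_right
          _ = 2 * X := by rw [tsum_geometric_of_lt_one (by norm_num) (by norm_num)]; norm_num
      have hlog2X : Real.log (‖E₁ z‖) ≤ Real.log 2 + Λ (r * (4 * e1)) := by
        have h1 : Real.log (‖E₁ z‖) ≤ Real.log (2 * X) :=
          Real.log_le_log (by linarith) (le_trans hEle hsumX)
        rwa [Real.log_mul two_ne_zero (ne_of_gt hXpos), hX, Real.log_exp] at h1
      have hlog2 : Real.log 2 ≤ 1 := by
        nlinarith [Real.log_le_sub_one_of_pos (show (0:ℝ) < 2 by norm_num)]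
      rcases le_or_gt r R with hrR | hrR
      · have h4 : Λ (r * (4 * e1)) ≤ max (r * (4 * e1)) 1 := hΛle _ hs'.le
        have h5 : max (r * (4 * e1)) 1 = r * (4 * e1) := max_eq_left (by nlinarith)
        have h6 : r * (4 * e1) ≤ R * (4 * e1) := by nlinarith
        nlinarith [mul_nonneg hCpos.le hΛr]
      · have hstrict : r > r₀ := lt_of_le_of_lt (le_max_left r₀ 1) hrR
        have h4 : Λ (r * (4 * e1)) ≤ (4 * e1) * Λ r :=
          hr₀ r hstrict (4 * e1) (by nlinarith)
        have h7 : (4 * e1) * Λ r ≤ (4 * e1 * (R + 1) + 2) * Λ r := by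
          apply mul_le_mul_of_nonneg_right _ hΛr
          nlinarith
        nlinarith
end
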